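/- arXiv:1409.3587 — 2 statements merged into one kernel-verified Lean document; each statement's English description precedes it below -/
import Mathlib

section
/- A positive real affine root α satisfies ℓ(s_α) = 2ht(α∨) − 1 if and only if either α is simple, or there exist indices i_1,...,i_k ∈ {0,...,n} with k ≥ 2 such that: each root s_{i_j}···s_{i_2}(α_{i_1}) satisfies ℓ of its reflection equal to 2·(height of its coroot) − 1, ⟨α_{i_j}, s_{i_{j−1}}···s_{i_2}(α_{i_1})∨⟩ = −1 for all 2 ≤ j ≤ k, α = s_{i_k}···s_{i_2}(α_{i_1}), and s_α = s_{i_k}···s_{i_2}s_{i_1}s_{i_2}···s_{i_k} is a reduced expression. In that case α∨ = α_{i_1}∨ + ··· + α_{i_k}∨. -/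
/-- Elements of the affine root lattice (resp. affine coroot lattice) of the affine
(untwisted) Kac–Moody root system, written in coordinates with respect to the simple
roots `α_0, …, α_n` (resp. the simple coroots `α_0∨, …, α_n∨`).  The dominance
(partial) order `a ≤ b` (meaning `b - a` is a nonnegative combination of the simple
roots/coroots) is the coordinatewise order. -/
abbrev AffLat (n : ℕ) := Fin (n + 1) → ℤ

/-- The `i`-th simple root (resp. simple coroot) as a coordinate vector. -/
def simpleVec {n : ℕ} (i : Fin (n + 1)) : AffLat n := Pi.single i 1

/-- The height of a root (resp. coroot): the sum of its coordinates in the basis of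
simple roots (resp. simple coroots). -/
def htv {n : ℕ} (a : AffLat n) : ℤ := ∑ j, a j

/-- `a` is a simple root (a standard basis vector). -/
def IsSimpleVec {n : ℕ} (a : AffLat n) : Prop := ∃ i, a = simpleVec i

/-- Axiomatization of the affine (untwisted) Kac–Moody root system attached to a
finite simple Lie algebra, together with its affine Weyl group `W` (a Coxeter group
with simple reflections `s_0, …, s_n`), its action on the root and coroot lattices,
the coroot map `α ↦ α∨` on real roots, the reflection map `α ↦ s_α`, and the
imaginary coroot `c = α_0∨ + θ∨`. -/
structure AffineRootSystem (n : ℕ) (W : Type*) [Group W] where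
  /-- the affine Cartan matrix: `cartan i j = ⟨α_j, α_i∨⟩` -/
  cartan : Fin (n + 1) → Fin (n + 1) → ℤ
  cartan_diag : ∀ i, cartan i i = 2
  cartan_offdiag : ∀ i j, i ≠ j → cartan i j ≤ 0
  cartan_symm_zero : ∀ i j, cartan i j = 0 → cartan j i = 0
  /-- the Coxeter matrix of the affine Weyl group -/
  M : CoxeterMatrix (Fin (n + 1))
  /-- the affine Weyl group, as a Coxeter system with simple reflections
  `cs.simple 0, …, cs.simple n` and Coxeter length `cs.length` -/
  cs : CoxeterSystem M W
  /-- the action of the affine Weyl group on the root lattice -/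
  actR : W → AffLat n → AffLat n
  actR_one : ∀ a, actR 1 a = a
  actR_mul : ∀ u v a, actR (u * v) a = actR u (actR v a)
  actR_add : ∀ w a b, actR w (a + b) = actR w a + actR w b
  actR_simple : ∀ i a, actR (cs.simple i) a = a - (∑ k, cartan i k * a k) • simpleVec i
  /-- the action of the affine Weyl group on the coroot lattice -/
  actC : W → AffLat n → AffLat n
  actC_one : ∀ b, actC 1 b = b
  actC_mul : ∀ u v b, actC (u * v) b = actC u (actC v b)
  actC_add : ∀ w a b, actC w (a + b) = actC w a + actC w b
  actC_simple : ∀ i b, actC (cs.simple i) b = b - (∑ k, cartan k i * b k) • simpleVec i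
  /-- the coroot `α∨` of a real root `α` -/
  coroot : AffLat n → AffLat n
  coroot_simple : ∀ i, coroot (simpleVec i) = simpleVec i
  coroot_act : ∀ w a, coroot (actR w a) = actC w (coroot a)
  /-- the reflection `s_α ∈ W` of a real root `α` -/
  refl : AffLat n → W
  refl_simple : ∀ i, refl (simpleVec i) = cs.simple i
  refl_act : ∀ w a, refl (actR w a) = w * refl a * w⁻¹
  /-- the coordinates of the imaginary coroot `c = α_0∨ + θ∨` in the basis of simple
  coroots; thus `imag 0 = 1` and `imag i = m_i` for `i ≥ 1`, where
  `θ∨ = m_1 α_1∨ + ⋯ + m_n α_n∨` -/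
  imag : AffLat n
  imag_zero : imag 0 = 1
  imag_pos : ∀ i, 1 ≤ imag i
  imag_invariant : ∀ w, actC w imag = imag
  /-- the standard relation between lengths and positivity of roots:
  `ℓ(w s_α) < ℓ(w)` iff `w(α) < 0` -/
  length_refl_lt_iff : ∀ a : AffLat n, (∃ w i, a = actR w (simpleVec i)) → 0 ≤ a →
    ∀ w : W, cs.length (w * refl a) < cs.length w ↔ actR w a ≤ 0

namespace AffineRootSystem

variable {n : ℕ} {W : Type*} [Group W] (R : AffineRootSystem n W)

/-- `α` is a positive real root of the affine root system. -/
def IsPosRoot (a : AffLat n) : Prop := (∃ w i, a = R.actR w (simpleVec i)) ∧ 0 ≤ a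

/-- The evaluation pairing `⟨α, β∨⟩` of a root `α` (coordinates w.r.t. the simple
roots) against a coroot `β∨` (coordinates w.r.t. the simple coroots), computed via
the affine Cartan matrix `cartan i k = ⟨α_k, α_i∨⟩`. -/
def pairing (a b : AffLat n) : ℤ := ∑ i, ∑ k, b i * (R.cartan i k * a k)

/-- `α` belongs to the set `Π̃` of positive real roots with `ℓ(s_α) = 2 ht(α∨) - 1`
(the roots appearing in the affine quantum Chevalley formula). -/
def IsChevalleyRoot (a : AffLat n) : Prop :=
  R.IsPosRoot a ∧ (R.cs.length (R.refl a) : ℤ) = 2 * htv (R.coroot a) - 1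

end AffineRootSystem

namespace AffineRootSystem

variable {n : ℕ} {W : Type*} [Group W]

/-- A "Chevalley chain" of length `k` for the affine root system: indices
`f 0, …, f (k-1)` of simple roots and the associated sequence of roots
`β 0 = α_{f 0}`, `β (j+1) = s_{f (j+1)} (β j)`, such that each `β j` lies in `Π̃`
(i.e. `ℓ(s_{β j}) = 2 ht((β j)∨) - 1`), each pairing
`⟨α_{f (j+1)}, (β j)∨⟩ = -1`, and the palindromic expression
`s_{β (k-1)} = s_{f (k-1)} ⋯ s_{f 1} s_{f 0} s_{f 1} ⋯ s_{f (k-1)}` is reduced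
(equivalently `ℓ(s_{β (k-1)}) = 2k - 1`). -/
def IsChevalleyChain (R : AffineRootSystem n W) (k : ℕ) (f : ℕ → Fin (n + 1))
    (β : ℕ → AffLat n) : Prop :=
  β 0 = simpleVec (f 0) ∧
  (∀ j, j + 1 < k → β (j + 1) = R.actR (R.cs.simple (f (j + 1))) (β j)) ∧
  (∀ j, j < k → R.IsChevalleyRoot (β j)) ∧
  (∀ j, j + 1 < k → R.pairing (simpleVec (f (j + 1))) (R.coroot (β j)) = -1) ∧
  R.cs.length (R.refl (β (k - 1))) = 2 * k - 1

end AffineRootSystem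

/-!
For a positive real root `a`, `∑ₖ aₖ ⟨α_k, a∨⟩ = ⟨a, a∨⟩ = 2`, so some `k` has `a_k ≥ 1` and
`⟨α_k, a∨⟩ ≥ 1`. Either `a = α_k`, or `s_k a` is again positive, `s_k` is a right descent of
both `s_a` and `s_k s_a`, and so `ℓ(s_{s_k a}) = ℓ(s_a) - 2` while
`ht((s_k a)∨) = ht(a∨) - ⟨α_k, a∨⟩`. Induction on `ℓ(s_a)` gives `ℓ(s_a) ≤ 2 ht(a∨) - 1`,
and equality for `a` forces `⟨α_k, a∨⟩ = 1`, hence `⟨α_k, (s_k a)∨⟩ = -1` and equality for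
`s_k a`. Descending this way to a simple root yields the chain; conversely each step of a
chain adds one simple coroot, `(s_i β)∨ = β∨ + α_i∨`.
-/

namespace AffineRootSystem

variable {n : ℕ} {W : Type*} [Group W] (R : AffineRootSystem n W)

lemma simpleVec_nonneg (i : Fin (n + 1)) : 0 ≤ simpleVec i := by
  simp only [simpleVec, Pi.single_nonneg, zero_le_one]

lemma simpleVec_le {a : AffLat n} {k : Fin (n + 1)} (h0 : 0 ≤ a) (hk : 1 ≤ a k) :
    simpleVec k ≤ a := by
  intro m
  rcases eq_or_ne m k with rfl | hm
  · simpa [simpleVec] using hk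
  · simpa [simpleVec, hm] using h0 m

lemma htv_simpleVec (i : Fin (n + 1)) : htv (simpleVec i) = 1 := by
  simp [htv, simpleVec]

lemma htv_sub_smul_simpleVec (b : AffLat n) (c : ℤ) (i : Fin (n + 1)) :
    htv (b - c • simpleVec i) = htv b - c := by
  simp [htv, simpleVec, Finset.sum_sub_distrib, Pi.single_apply]

lemma pairing_eq_dotProduct (a b : AffLat n) :
    R.pairing a b = dotProduct b (Matrix.mulVec (Matrix.of R.cartan) a) := by
  simp [pairing, dotProduct, Matrix.mulVec, Finset.mul_sum]

lemma pairing_simpleVec_right (a : AffLat n) (i : Fin (n + 1)) :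
    R.pairing a (simpleVec i) = ∑ k, R.cartan i k * a k := by
  rw [pairing_eq_dotProduct, simpleVec, single_one_dotProduct]
  rfl

lemma pairing_simpleVec_left (b : AffLat n) (i : Fin (n + 1)) :
    R.pairing (simpleVec i) b = ∑ j, b j * R.cartan j i := by
  rw [pairing_eq_dotProduct, simpleVec, Matrix.mulVec_single_one]
  rfl

lemma pairing_simpleVec_simpleVec (i k : Fin (n + 1)) :
    R.pairing (simpleVec k) (simpleVec i) = R.cartan i k := by
  rw [pairing_eq_dotProduct, simpleVec, simpleVec, Matrix.mulVec_single_one,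
    single_one_dotProduct]
  rfl

lemma pairing_sub_smul_left (a b c : AffLat n) (t : ℤ) :
    R.pairing (a - t • c) b = R.pairing a b - t * R.pairing c b := by
  simp only [pairing_eq_dotProduct, Matrix.mulVec_sub, Matrix.mulVec_smul, dotProduct_sub,
    dotProduct_smul, smul_eq_mul]

lemma pairing_sub_smul_right (a b c : AffLat n) (t : ℤ) :
    R.pairing a (b - t • c) = R.pairing a b - t * R.pairing a c := by
  simp only [pairing_eq_dotProduct, sub_dotProduct, smul_dotProduct, smul_eq_mul]

lemma pairing_eq_sum_left (a b : AffLat n) :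
    R.pairing a b = ∑ k, a k * R.pairing (simpleVec k) b := by
  simp only [pairing_eq_dotProduct, Matrix.dotProduct_mulVec, simpleVec, dotProduct_single,
    mul_one]
  exact dotProduct_comm _ _

lemma actR_simple_eq (i : Fin (n + 1)) (a : AffLat n) :
    R.actR (R.cs.simple i) a = a - R.pairing a (simpleVec i) • simpleVec i := by
  rw [R.actR_simple, pairing_simpleVec_right]

lemma actC_simple_eq (i : Fin (n + 1)) (b : AffLat n) :
    R.actC (R.cs.simple i) b = b - R.pairing (simpleVec i) b • simpleVec i := by
  simp only [R.actC_simple, pairing_simpleVec_left, mul_comm]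

lemma actR_sub (w : W) (a b : AffLat n) : R.actR w (a - b) = R.actR w a - R.actR w b :=
  map_sub (AddMonoidHom.mk' (R.actR w) (R.actR_add w)) a b

lemma actR_neg (w : W) (a : AffLat n) : R.actR w (-a) = -R.actR w a :=
  map_neg (AddMonoidHom.mk' (R.actR w) (R.actR_add w)) a

lemma actR_zsmul (w : W) (t : ℤ) (a : AffLat n) : R.actR w (t • a) = t • R.actR w a :=
  map_zsmul (AddMonoidHom.mk' (R.actR w) (R.actR_add w)) t a

lemma actR_inv_actR (w : W) (a : AffLat n) : R.actR w⁻¹ (R.actR w a) = a := by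
  rw [← R.actR_mul, inv_mul_cancel, R.actR_one]

lemma actR_actR_inv (w : W) (a : AffLat n) : R.actR w (R.actR w⁻¹ a) = a := by
  rw [← R.actR_mul, mul_inv_cancel, R.actR_one]

lemma actR_simple_actR_simple (i : Fin (n + 1)) (a : AffLat n) :
    R.actR (R.cs.simple i) (R.actR (R.cs.simple i) a) = a := by
  rw [← R.actR_mul, R.cs.simple_mul_simple_self, R.actR_one]

lemma actR_simple_simpleVec_self (i : Fin (n + 1)) :
    R.actR (R.cs.simple i) (simpleVec i) = -simpleVec i := by
  rw [actR_simple_eq, pairing_simpleVec_simpleVec, R.cartan_diag, two_smul, sub_add_cancel_left]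

lemma coroot_actR_simple (i : Fin (n + 1)) (a : AffLat n) :
    R.coroot (R.actR (R.cs.simple i) a) =
      R.coroot a - R.pairing (simpleVec i) (R.coroot a) • simpleVec i := by
  rw [R.coroot_act, actC_simple_eq]

lemma pairing_actR_actC (w : W) (a b : AffLat n) :
    R.pairing (R.actR w a) (R.actC w b) = R.pairing a b := by
  induction w using R.cs.simple_induction generalizing a b with
  | simple i =>
    rw [actR_simple_eq, actC_simple_eq, pairing_sub_smul_right, pairing_sub_smul_left,
      pairing_sub_smul_left, pairing_simpleVec_simpleVec, R.cartan_diag]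
    ring
  | one => rw [R.actR_one, R.actC_one]
  | mul u v hu hv => rw [R.actR_mul, R.actC_mul, hu, hv]

def IsRealRoot (a : AffLat n) : Prop := ∃ w i, a = R.actR w (simpleVec i)

lemma isRealRoot_simpleVec (i : Fin (n + 1)) : R.IsRealRoot (simpleVec i) :=
  ⟨1, i, (R.actR_one _).symm⟩

lemma isPosRoot_simpleVec (i : Fin (n + 1)) : R.IsPosRoot (simpleVec i) :=
  ⟨R.isRealRoot_simpleVec i, simpleVec_nonneg i⟩

lemma isChevalleyRoot_simpleVec (i : Fin (n + 1)) : R.IsChevalleyRoot (simpleVec i) := by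
  refine ⟨R.isPosRoot_simpleVec i, ?_⟩
  rw [R.refl_simple, R.cs.length_simple, R.coroot_simple, htv_simpleVec]
  norm_num

lemma actR_simpleVec_nonpos_iff (w : W) (i : Fin (n + 1)) :
    R.actR w (simpleVec i) ≤ 0 ↔ R.cs.length (w * R.cs.simple i) < R.cs.length w := by
  rw [← R.refl_simple, R.length_refl_lt_iff _ (R.isRealRoot_simpleVec i) (simpleVec_nonneg i)]

lemma length_mul_simple_of_actR_nonpos (w : W) (i : Fin (n + 1))
    (h : R.actR w (simpleVec i) ≤ 0) : R.cs.length (w * R.cs.simple i) + 1 = R.cs.length w := by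
  have := (R.actR_simpleVec_nonpos_iff w i).mp h
  rcases R.cs.length_mul_simple w i with h' | h' <;> omega

section RealRoot

variable {R} {a : AffLat n}

lemma IsRealRoot.actR (ha : R.IsRealRoot a) (w : W) : R.IsRealRoot (R.actR w a) := by
  obtain ⟨u, i, rfl⟩ := ha
  exact ⟨w * u, i, (R.actR_mul w u _).symm⟩

lemma IsRealRoot.pairing_coroot_self (ha : R.IsRealRoot a) : R.pairing a (R.coroot a) = 2 := by
  obtain ⟨w, i, rfl⟩ := ha
  rw [R.coroot_act, R.coroot_simple, pairing_actR_actC, pairing_simpleVec_simpleVec,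
    R.cartan_diag]

lemma IsRealRoot.refl_inv (ha : R.IsRealRoot a) : (R.refl a)⁻¹ = R.refl a := by
  obtain ⟨w, i, rfl⟩ := ha
  rw [R.refl_act, R.refl_simple, mul_inv_rev, mul_inv_rev, inv_inv, R.cs.inv_simple, mul_assoc]

lemma IsRealRoot.actR_refl (ha : R.IsRealRoot a) (b : AffLat n) :
    R.actR (R.refl a) b = b - R.pairing b (R.coroot a) • a := by
  obtain ⟨w, i, rfl⟩ := ha
  have hpair : R.pairing (R.actR w⁻¹ b) (simpleVec i) = R.pairing b (R.actC w (simpleVec i)) := by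
    rw [← R.pairing_actR_actC w, actR_actR_inv]
  rw [R.refl_act, R.refl_simple, R.actR_mul, R.actR_mul, actR_simple_eq, actR_sub, actR_zsmul,
    actR_actR_inv, hpair, R.coroot_act, R.coroot_simple]

/-- `a = c • α_k`, so `c` divides every coordinate of `w⁻¹ a = α_i`; hence `c = 1`. -/
lemma IsRealRoot.eq_simpleVec_of_support (ha : R.IsRealRoot a) (h0 : 0 ≤ a) {k : Fin (n + 1)}
    (hsupp : ∀ m, m ≠ k → a m = 0) : a = simpleVec k := by
  obtain ⟨w, i, hwa⟩ := ha
  have hrepr : a = a k • simpleVec k := by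
    ext m
    rcases eq_or_ne m k with rfl | hm
    · simp [simpleVec]
    · simp [simpleVec, hm, hsupp m hm]
  have hunit : a k * R.actR w⁻¹ (simpleVec k) i = 1 := by
    have := congrFun (congrArg (R.actR w⁻¹) hrepr) i
    rw [hwa, actR_inv_actR, actR_zsmul, ← hwa] at this
    simpa [simpleVec] using this.symm
  have hak : a k = 1 := by
    rcases Int.eq_one_or_neg_one_of_mul_eq_one hunit with h | h
    · exact h
    · have : (0 : ℤ) ≤ a k := h0 k
      omega
  rw [hrepr, hak, one_smul]

lemma IsRealRoot.nonneg_or_nonpos (ha : R.IsRealRoot a) : 0 ≤ a ∨ a ≤ 0 := by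
  obtain ⟨w, i, rfl⟩ := ha
  rcases lt_or_gt_of_ne (R.cs.length_mul_simple_ne w i) with h | h
  · exact Or.inr ((R.actR_simpleVec_nonpos_iff w i).mpr h)
  · have := (R.actR_simpleVec_nonpos_iff (w * R.cs.simple i) i).mpr
      (by rwa [mul_assoc, R.cs.simple_mul_simple_self, mul_one])
    rw [R.actR_mul, actR_simple_simpleVec_self, actR_neg, neg_nonpos] at this
    exact Or.inl this

end RealRoot

section PosRoot

variable {R} {a : AffLat n}

lemma IsPosRoot.isRealRoot (ha : R.IsPosRoot a) : R.IsRealRoot a := ha.1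

lemma IsPosRoot.exists_one_le_apply_one_le_pairing (ha : R.IsPosRoot a) :
    ∃ k, 1 ≤ a k ∧ 1 ≤ R.pairing (simpleVec k) (R.coroot a) := by
  have hsum : ∑ _k : Fin (n + 1), (0 : ℤ) < ∑ k, a k * R.pairing (simpleVec k) (R.coroot a) := by
    rw [← pairing_eq_sum_left, ha.isRealRoot.pairing_coroot_self, Finset.sum_const_zero]
    norm_num
  obtain ⟨k, -, hk⟩ := Finset.exists_lt_of_sum_lt hsum
  rcases pos_and_pos_or_neg_and_neg_of_mul_pos hk with ⟨h1, h2⟩ | ⟨h1, -⟩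
  · exact ⟨k, h1, h2⟩
  · exact absurd (ha.2 k) (not_le.mpr h1)

/-- `s_k` is a right descent of both `s_a` and `s_k s_a`: it sends `α_k` to
`α_k - p a ≤ 0`, resp. `-α_k - p (s_k a) ≤ 0`, where `p = ⟨α_k, a∨⟩`. -/
lemma IsPosRoot.length_refl_actR_simple_add_two (ha : R.IsPosRoot a) {k : Fin (n + 1)}
    (hak : 1 ≤ a k) (hp : 1 ≤ R.pairing (simpleVec k) (R.coroot a))
    (hb : 0 ≤ R.actR (R.cs.simple k) a) :
    R.cs.length (R.refl (R.actR (R.cs.simple k) a)) + 2 = R.cs.length (R.refl a) := by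
  set p := R.pairing (simpleVec k) (R.coroot a)
  have hrefl : R.actR (R.refl a) (simpleVec k) = simpleVec k - p • a := ha.isRealRoot.actR_refl _
  have h1 : R.cs.length (R.refl a * R.cs.simple k) + 1 = R.cs.length (R.refl a) := by
    refine R.length_mul_simple_of_actR_nonpos _ _ ?_
    rw [hrefl, sub_nonpos]
    exact (simpleVec_le ha.2 hak).trans (le_smul_of_one_le_left ha.2 hp)
  have h2 : R.cs.length (R.cs.simple k * R.refl a * R.cs.simple k) + 1 =
      R.cs.length (R.cs.simple k * R.refl a) := by
    refine R.length_mul_simple_of_actR_nonpos _ _ ?_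
    rw [R.actR_mul, hrefl, actR_sub, actR_zsmul, actR_simple_simpleVec_self, ← neg_add',
      neg_nonpos]
    exact add_nonneg (simpleVec_nonneg k) (smul_nonneg (by omega) hb)
  have h3 : R.cs.length (R.cs.simple k * R.refl a) = R.cs.length (R.refl a * R.cs.simple k) := by
    rw [← R.cs.length_inv, mul_inv_rev, ha.isRealRoot.refl_inv, R.cs.inv_simple]
  rw [R.refl_act, R.cs.inv_simple]
  omega

lemma IsPosRoot.isSimpleVec_or_descent (ha : R.IsPosRoot a) :
    IsSimpleVec a ∨ ∃ k, 1 ≤ R.pairing (simpleVec k) (R.coroot a) ∧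
      R.IsPosRoot (R.actR (R.cs.simple k) a) ∧
      R.cs.length (R.refl (R.actR (R.cs.simple k) a)) + 2 = R.cs.length (R.refl a) := by
  obtain ⟨k, hak, hp⟩ := ha.exists_one_le_apply_one_le_pairing
  rcases (ha.isRealRoot.actR (R.cs.simple k)).nonneg_or_nonpos with hb | hb
  · exact Or.inr ⟨k, hp, ⟨ha.isRealRoot.actR _, hb⟩, ha.length_refl_actR_simple_add_two hak hp hb⟩
  · refine Or.inl ⟨k, ha.isRealRoot.eq_simpleVec_of_support ha.2 fun m hm => ?_⟩
    have hm' : R.actR (R.cs.simple k) a m = a m := by simp [actR_simple_eq, simpleVec, hm]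
    exact le_antisymm (hm' ▸ hb m) (ha.2 m)

lemma IsPosRoot.length_refl_le {a : AffLat n} (ha : R.IsPosRoot a) :
    (R.cs.length (R.refl a) : ℤ) ≤ 2 * htv (R.coroot a) - 1 := by
  rcases ha.isSimpleVec_or_descent with ⟨i, rfl⟩ | ⟨k, hp, hb, hlen⟩
  · rw [R.refl_simple, R.cs.length_simple, R.coroot_simple, htv_simpleVec]
    norm_num
  · have := hb.length_refl_le
    rw [coroot_actR_simple, htv_sub_smul_simpleVec] at this
    omega
termination_by R.cs.length (R.refl a)

lemma IsChevalleyRoot.isSimpleVec_or_descent (ha : R.IsChevalleyRoot a) :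
    IsSimpleVec a ∨ ∃ k, R.IsChevalleyRoot (R.actR (R.cs.simple k) a) ∧
      R.pairing (simpleVec k) (R.coroot (R.actR (R.cs.simple k) a)) = -1 ∧
      R.cs.length (R.refl (R.actR (R.cs.simple k) a)) + 2 = R.cs.length (R.refl a) := by
  refine ha.1.isSimpleVec_or_descent.imp_right fun ⟨k, hp, hb, hlen⟩ => ⟨k, ?_⟩
  have hcor := R.coroot_actR_simple k a
  have hbound := hb.length_refl_le
  rw [hcor, htv_sub_smul_simpleVec] at hbound
  have hchev := ha.2
  have hp1 : R.pairing (simpleVec k) (R.coroot a) = 1 := by omega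
  refine ⟨⟨hb, ?_⟩, ?_, hlen⟩
  · rw [hcor, htv_sub_smul_simpleVec]
    omega
  · rw [hcor, pairing_sub_smul_right, pairing_simpleVec_simpleVec, R.cartan_diag, hp1]
    norm_num

end PosRoot

lemma isChevalleyChain_one (i : Fin (n + 1)) :
    R.IsChevalleyChain 1 (fun _ => i) (fun _ => simpleVec i) := by
  refine ⟨rfl, fun j hj => by omega, fun _ _ => R.isChevalleyRoot_simpleVec i,
    fun j hj => by omega, ?_⟩
  rw [R.refl_simple, R.cs.length_simple]

section Chain

variable {R} {k : ℕ} {f : ℕ → Fin (n + 1)} {β : ℕ → AffLat n}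

lemma IsChevalleyChain.snoc (h : R.IsChevalleyChain k f β) (hk : 1 ≤ k) {i : Fin (n + 1)}
    {a : AffLat n} (hβa : β (k - 1) = R.actR (R.cs.simple i) a) (ha : R.IsChevalleyRoot a)
    (hpair : R.pairing (simpleVec i) (R.coroot (R.actR (R.cs.simple i) a)) = -1)
    (hlen : R.cs.length (R.refl (R.actR (R.cs.simple i) a)) + 2 = R.cs.length (R.refl a)) :
    R.IsChevalleyChain (k + 1) (Function.update f k i) (Function.update β k a) := by
  obtain ⟨h0, hstep, hroots, hpairs, hlast⟩ := h
  refine ⟨?_, fun j hj => ?_, fun j hj => ?_, fun j hj => ?_, ?_⟩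
  · simp [Function.update_of_ne (show 0 ≠ k by omega), h0]
  · rcases (show j + 1 = k ∨ j + 1 < k by omega) with rfl | hj
    · rw [Nat.add_sub_cancel] at hβa
      simp [hβa, actR_simple_actR_simple]
    · simp [Function.update_of_ne hj.ne, Function.update_of_ne (show j ≠ k by omega), hstep j hj]
  · rcases (show j = k ∨ j < k by omega) with rfl | hj
    · simpa using ha
    · simpa [Function.update_of_ne hj.ne] using hroots j hj
  · rcases (show j + 1 = k ∨ j + 1 < k by omega) with rfl | hj
    · rw [Nat.add_sub_cancel] at hβa
      simpa [hβa] using hpair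
    · simpa [Function.update_of_ne hj.ne, Function.update_of_ne (show j ≠ k by omega)]
        using hpairs j hj
  · rw [hβa] at hlast
    simp only [Nat.add_sub_cancel, Function.update_self]
    omega

lemma IsChevalleyChain.coroot_eq_sum (h : R.IsChevalleyChain k f β) {j : ℕ} (hj : j < k) :
    R.coroot (β j) = ∑ m ∈ Finset.range (j + 1), simpleVec (f m) := by
  induction j with
  | zero => rw [h.1, R.coroot_simple, Finset.sum_range_one]
  | succ j ih =>
    rw [h.2.1 j hj, coroot_actR_simple, h.2.2.2.1 j hj, ih (by omega),
      Finset.sum_range_succ _ (j + 1), neg_smul, one_smul, sub_neg_eq_add]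

end Chain

lemma IsChevalleyRoot.exists_chain {a : AffLat n} (ha : R.IsChevalleyRoot a) :
    ∃ k f β, 1 ≤ k ∧ R.IsChevalleyChain k f β ∧ a = β (k - 1) := by
  rcases ha.isSimpleVec_or_descent with ⟨i, rfl⟩ | ⟨i, hb, hpair, hlen⟩
  · exact ⟨1, _, _, le_rfl, R.isChevalleyChain_one i, rfl⟩
  · obtain ⟨k, f, β, hk, hchain, hbβ⟩ := hb.exists_chain
    exact ⟨k + 1, _, _, by omega, hchain.snoc hk hbβ.symm ha hpair hlen, by simp⟩
termination_by R.cs.length (R.refl a)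

end AffineRootSystem

theorem chevalley_root_iff_chain_general {n : ℕ} {W : Type*} [Group W]
    (R : AffineRootSystem n W) (a : AffLat n) :
    (R.IsChevalleyRoot a ↔ (IsSimpleVec a ∨
      ∃ (k : ℕ) (f : ℕ → Fin (n + 1)) (β : ℕ → AffLat n),
        2 ≤ k ∧ R.IsChevalleyChain k f β ∧ a = β (k - 1))) ∧
    (∀ (k : ℕ) (f : ℕ → Fin (n + 1)) (β : ℕ → AffLat n),
        2 ≤ k → R.IsChevalleyChain k f β → a = β (k - 1) →
        R.coroot a = ∑ j ∈ Finset.range k, simpleVec (f j)) := by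
  refine ⟨⟨fun ha => ?_, ?_⟩, fun k f β hk hchain hend => ?_⟩
  · obtain ⟨k, f, β, hk, hchain, rfl⟩ := ha.exists_chain
    rcases hk.eq_or_lt with rfl | hk
    · exact Or.inl ⟨f 0, hchain.1⟩
    · exact Or.inr ⟨k, f, β, hk, hchain, rfl⟩
  · rintro (⟨i, rfl⟩ | ⟨k, f, β, hk, hchain, rfl⟩)
    · exact R.isChevalleyRoot_simpleVec i
    · exact hchain.2.2.1 (k - 1) (by omega)
  · rw [hend, hchain.coroot_eq_sum (by omega : k - 1 < k), Nat.sub_add_cancel (by omega)]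

/-- A positive real affine root `α` satisfies
`ℓ(s_α) = 2 ht(α∨) - 1` if and only if it is simple, or there is a Chevalley chain
`β 0 = α_{i_1}`, `β j = s_{i_{j+1}} ⋯ s_{i_2}(α_{i_1})` of some length `k ≥ 2`
ending at `α`; moreover for any such chain `α∨ = α_{i_1}∨ + ⋯ + α_{i_k}∨`. -/
theorem chevalley_root_iff_chain {n : ℕ} {W : Type*} [Group W]
    (R : AffineRootSystem n W) (a : AffLat n) (ha : R.IsPosRoot a) :
    (R.IsChevalleyRoot a ↔ (IsSimpleVec a ∨
      ∃ (k : ℕ) (f : ℕ → Fin (n + 1)) (β : ℕ → AffLat n),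
        2 ≤ k ∧ R.IsChevalleyChain k f β ∧ a = β (k - 1))) ∧
    (∀ (k : ℕ) (f : ℕ → Fin (n + 1)) (β : ℕ → AffLat n),
        2 ≤ k → R.IsChevalleyChain k f β → a = β (k - 1) →
        R.coroot a = ∑ j ∈ Finset.range k, simpleVec (f j)) :=
  chevalley_root_iff_chain_general R a
end

section
/- In the affine Weyl group of type A_1^{(1)} (the infinite dihedral group with generators s_0, s_1), there exists a Weyl group element w and indices such that the affine quantum Chevalley operators fail to commute without the q^c constraint; concretely, for G = SL_2(ℂ) one has Λ_0Λ_1(ε_{s_0s_1}) − Λ_1Λ_0(ε_{s_0s_1}) = q^c · ε_e, where q^c = q_0q_1. -/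
open scoped Classical

noncomputable section

namespace AffineRootSystem

variable {W : Type*} [Group W]

/-- The quantum monomial `q^{d} = q_0^{d_0} q_1^{d_1}` attached to an (effective)
degree `d` in the coroot lattice of the affine root system of `SL_2(ℂ)`. -/
def qMono (d : AffLat 1) : MvPolynomial (Fin 2) ℤ :=
  ∏ i, (MvPolynomial.X i) ^ (d i).toNat

/-- The affine quantum Chevalley operator `Λ_i` for `G = SL_2(ℂ)`, acting on
`H^*(Fl_G) ⊗ ℤ[q_0, q_1]`, realized as functions from the affine Weyl group `W`
(the infinite dihedral group) to `ℤ[q_0, q_1]` via the Schubert basis `ε_w`: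
`Λ_i(ε_u) = ε_i · ε_u + Σ ⟨λ_i, α∨⟩ q^{α∨} ε_{u s_α}`, where the cup product is
given by the affine Chevalley formula
`ε_i · ε_u = Σ_{ℓ(u s_α) = ℓ(u) + 1} ⟨λ_i, α∨⟩ ε_{u s_α}`, and the quantum sum is
over positive real roots `α` with `ℓ(u s_α) = ℓ(u) + 1 - 2 ht(α∨)`.  The value at
`v` collects the contributions with `u s_α = v`, i.e. `u = v s_α`. -/
def Lam (R : AffineRootSystem 1 W) (i : Fin 2)
    (f : W → MvPolynomial (Fin 2) ℤ) : W → MvPolynomial (Fin 2) ℤ := fun v =>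
  (∑ᶠ a : AffLat 1,
    if R.IsPosRoot a ∧ R.cs.length v = R.cs.length (v * R.refl a) + 1
    then (R.coroot a i) • f (v * R.refl a) else 0) +
  (∑ᶠ a : AffLat 1,
    if R.IsPosRoot a ∧
        (R.cs.length v : ℤ)
          = (R.cs.length (v * R.refl a) : ℤ) + 1 - 2 * htv (R.coroot a)
    then (R.coroot a i) • (qMono (R.coroot a) * f (v * R.refl a)) else 0)

/-- The Schubert basis element `ε_w` of `H^*(Fl_G) ⊗ ℤ[q_0, q_1]`, viewed as a
function on the affine Weyl group. -/
def eps (w : W) : W → MvPolynomial (Fin 2) ℤ := fun v => if v = w then 1 else 0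

end AffineRootSystem

namespace Sl2Aux

open AffineRootSystem

variable {W : Type*} [Group W]

/-! ### Coordinate vectors -/

def vec (x y : ℤ) : AffLat 1 := ![x, y]

@[simp] lemma vec_app0 (x y : ℤ) : vec x y 0 = x := rfl
@[simp] lemma vec_app1 (x y : ℤ) : vec x y 1 = y := rfl

lemma vec_eta (a : AffLat 1) : a = vec (a 0) (a 1) := by
  funext j; fin_cases j <;> rfl

lemma vec_inj {x y x' y' : ℤ} (h : vec x y = vec x' y') : x = x' ∧ y = y' :=
  ⟨congrFun h 0, congrFun h 1⟩

lemma simpleVec_zero : (simpleVec 0 : AffLat 1) = vec 1 0 := by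
  funext j; fin_cases j <;> simp [simpleVec, vec]

lemma simpleVec_one : (simpleVec 1 : AffLat 1) = vec 0 1 := by
  funext j; fin_cases j <;> simp [simpleVec, vec]

@[simp] lemma htv_vec (x y : ℤ) : htv (vec x y) = x + y := by
  simp [htv, Fin.sum_univ_two]

lemma zero_le_vec {x y : ℤ} : (0 : AffLat 1) ≤ vec x y ↔ 0 ≤ x ∧ 0 ≤ y := by
  constructor
  · intro h; exact ⟨h 0, h 1⟩
  · rintro ⟨h1, h2⟩ j; fin_cases j <;> assumption

lemma vec_le_zero {x y : ℤ} : vec x y ≤ 0 ↔ x ≤ 0 ∧ y ≤ 0 := by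
  constructor
  · intro h; exact ⟨h 0, h 1⟩
  · rintro ⟨h1, h2⟩ j; fin_cases j <;> assumption

variable (R : AffineRootSystem 1 W)

/-! ### Explicit action of the simple reflections -/

lemma actR_s0 (hc : ∀ i j, R.cartan i j = if i = j then 2 else -2) (x y : ℤ) :
    R.actR (R.cs.simple 0) (vec x y) = vec (2*y - x) y := by
  rw [R.actR_simple, simpleVec_zero]
  funext j
  fin_cases j <;>
    simp [Fin.sum_univ_two, hc, vec, Pi.sub_apply, Pi.smul_apply] <;> ring

lemma actR_s1 (hc : ∀ i j, R.cartan i j = if i = j then 2 else -2) (x y : ℤ) :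
    R.actR (R.cs.simple 1) (vec x y) = vec x (2*x - y) := by
  rw [R.actR_simple, simpleVec_one]
  funext j
  fin_cases j <;>
    simp [Fin.sum_univ_two, hc, vec, Pi.sub_apply, Pi.smul_apply] <;> ring

lemma actC_s0 (hc : ∀ i j, R.cartan i j = if i = j then 2 else -2) (x y : ℤ) :
    R.actC (R.cs.simple 0) (vec x y) = vec (2*y - x) y := by
  rw [R.actC_simple, simpleVec_zero]
  funext j
  fin_cases j <;>
    simp [Fin.sum_univ_two, hc, vec, Pi.sub_apply, Pi.smul_apply] <;> ring

lemma actC_s1 (hc : ∀ i j, R.cartan i j = if i = j then 2 else -2) (x y : ℤ) :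
    R.actC (R.cs.simple 1) (vec x y) = vec x (2*x - y) := by
  rw [R.actC_simple, simpleVec_one]
  funext j
  fin_cases j <;>
    simp [Fin.sum_univ_two, hc, vec, Pi.sub_apply, Pi.smul_apply] <;> ring

lemma actC_eq_actR (hc : ∀ i j, R.cartan i j = if i = j then 2 else -2)
    (w : W) (a : AffLat 1) : R.actC w a = R.actR w a := by
  induction w using R.cs.simple_induction generalizing a with
  | simple i =>
      rw [vec_eta a]
      fin_cases i
      · show R.actC (R.cs.simple 0) _ = R.actR (R.cs.simple 0) _
        rw [actR_s0 R hc, actC_s0 R hc]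
      · show R.actC (R.cs.simple 1) _ = R.actR (R.cs.simple 1) _
        rw [actR_s1 R hc, actC_s1 R hc]
  | one => rw [R.actR_one, R.actC_one]
  | mul u v hu hv => rw [R.actR_mul, R.actC_mul, hv, hu]

lemma coroot_eq_self (hc : ∀ i j, R.cartan i j = if i = j then 2 else -2)
    {a : AffLat 1} (h : R.IsPosRoot a) : R.coroot a = a := by
  obtain ⟨⟨w, i, rfl⟩, -⟩ := h
  rw [R.coroot_act, R.coroot_simple, actC_eq_actR R hc]

lemma refl_sq {a : AffLat 1} (h : R.IsPosRoot a) : R.refl a * R.refl a = 1 := by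
  obtain ⟨⟨w, i, rfl⟩, -⟩ := h
  rw [R.refl_act, R.refl_simple]
  have : w * R.cs.simple i * w⁻¹ * (w * R.cs.simple i * w⁻¹)
      = w * (R.cs.simple i * R.cs.simple i) * w⁻¹ := by group
  rw [this, R.cs.simple_mul_simple_self]
  group

/-! ### Alternating words -/

def gp (R : AffineRootSystem 1 W) : ℕ → W × W
  | 0 => (1, 1)
  | (n+1) => ((gp R n).2 * R.cs.simple 0, (gp R n).1 * R.cs.simple 1)

def g0 (n : ℕ) : W := (gp R n).1
def g1 (n : ℕ) : W := (gp R n).2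

@[simp] lemma g0_zero : g0 R 0 = 1 := rfl
@[simp] lemma g1_zero : g1 R 0 = 1 := rfl
lemma g0_succ (n : ℕ) : g0 R (n+1) = g1 R n * R.cs.simple 0 := rfl
lemma g1_succ (n : ℕ) : g1 R (n+1) = g0 R n * R.cs.simple 1 := rfl

lemma vec_congr {x y x' y' : ℤ} (hx : x = x') (hy : y = y') : vec x y = vec x' y' := by
  rw [hx, hy]

lemma act_g (hc : ∀ i j, R.cartan i j = if i = j then 2 else -2) : ∀ k : ℕ,
    (∀ x y : ℤ, R.actR (g0 R (2*k)) (vec x y)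
      = vec ((1-2*k)*x + 2*k*y) (-(2*k)*x + (2*k+1)*y)) ∧
    (∀ x y : ℤ, R.actR (g1 R (2*k)) (vec x y)
      = vec ((2*k+1)*x - 2*k*y) (2*k*x + (1-2*k)*y)) ∧
    (∀ x y : ℤ, R.actR (g0 R (2*k+1)) (vec x y)
      = vec (-(2*k+1)*x + (2*k+2)*y) (-(2*k)*x + (2*k+1)*y)) ∧
    (∀ x y : ℤ, R.actR (g1 R (2*k+1)) (vec x y)
      = vec ((2*k+1)*x - 2*k*y) ((2*k+2)*x - (2*k+1)*y)) := by
  intro k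
  induction k with
  | zero =>
      refine ⟨?_, ?_, ?_, ?_⟩ <;> intro x y
      · rw [show (2*0 : ℕ) = 0 from rfl, g0_zero, R.actR_one]
        exact vec_congr (by push_cast; ring) (by push_cast; ring)
      · rw [show (2*0 : ℕ) = 0 from rfl, g1_zero, R.actR_one]
        exact vec_congr (by push_cast; ring) (by push_cast; ring)
      · rw [show (2*0+1 : ℕ) = 0+1 from rfl, g0_succ, g1_zero, one_mul, actR_s0 R hc]
        exact vec_congr (by push_cast; ring) (by push_cast; ring)
      · rw [show (2*0+1 : ℕ) = 0+1 from rfl, g1_succ, g0_zero, one_mul, actR_s1 R hc]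
        exact vec_congr (by push_cast; ring) (by push_cast; ring)
  | succ k ih =>
      obtain ⟨ih0e, ih1e, ih0o, ih1o⟩ := ih
      have h0e : ∀ x y : ℤ, R.actR (g0 R (2*(k+1))) (vec x y)
          = vec ((1-2*(k+1):ℤ)*x + 2*(k+1)*y) (-(2*(k+1):ℤ)*x + (2*(k+1)+1)*y) := by
        intro x y
        rw [show 2*(k+1) = (2*k+1)+1 from by ring, g0_succ, R.actR_mul, actR_s0 R hc, ih1o]
        exact vec_congr (by push_cast; ring) (by push_cast; ring)
      have h1e : ∀ x y : ℤ, R.actR (g1 R (2*(k+1))) (vec x y)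
          = vec ((2*(k+1)+1:ℤ)*x - 2*(k+1)*y) ((2*(k+1):ℤ)*x + (1-2*(k+1))*y) := by
        intro x y
        rw [show 2*(k+1) = (2*k+1)+1 from by ring, g1_succ, R.actR_mul, actR_s1 R hc, ih0o]
        exact vec_congr (by push_cast; ring) (by push_cast; ring)
      have h0o : ∀ x y : ℤ, R.actR (g0 R (2*(k+1)+1)) (vec x y)
          = vec (-(2*(k+1)+1:ℤ)*x + (2*(k+1)+2)*y) (-(2*(k+1):ℤ)*x + (2*(k+1)+1)*y) := by
        intro x y
        rw [g0_succ, R.actR_mul, actR_s0 R hc, h1e]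
        exact vec_congr (by push_cast; ring) (by push_cast; ring)
      have h1o : ∀ x y : ℤ, R.actR (g1 R (2*(k+1)+1)) (vec x y)
          = vec ((2*(k+1)+1:ℤ)*x - 2*(k+1)*y) ((2*(k+1)+2:ℤ)*x - (2*(k+1)+1)*y) := by
        intro x y
        rw [g1_succ, R.actR_mul, actR_s1 R hc, h0e]
        exact vec_congr (by push_cast; ring) (by push_cast; ring)
      refine ⟨?_, ?_, ?_, ?_⟩
      · intro x y
        rw [h0e x y]; exact vec_congr (by push_cast; ring) (by push_cast; ring)
      · intro x y
        rw [h1e x y]; exact vec_congr (by push_cast; ring) (by push_cast; ring)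
      · intro x y
        rw [h0o x y]; exact vec_congr (by push_cast; ring) (by push_cast; ring)
      · intro x y
        rw [h1o x y]; exact vec_congr (by push_cast; ring) (by push_cast; ring)

/-! ### Lengths -/

lemma posRoot_simpleVec (i : Fin 2) : R.IsPosRoot (simpleVec i) := by
  refine ⟨⟨1, i, (R.actR_one _).symm⟩, ?_⟩
  intro j
  rcases eq_or_ne j i with rfl | h
  · simp [simpleVec]
  · simp [simpleVec, Pi.single_eq_of_ne h]

lemma length_mul_simple_of_pos (w : W) (i : Fin 2)
    (h : ¬ R.actR w (simpleVec i) ≤ 0) :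
    R.cs.length (w * R.cs.simple i) = R.cs.length w + 1 := by
  have hiff := R.length_refl_lt_iff (simpleVec i) ⟨1, i, (R.actR_one _).symm⟩
    (posRoot_simpleVec R i).2 w
  rw [R.refl_simple] at hiff
  rcases R.cs.length_mul_simple w i with e | e
  · exact e
  · exact absurd (hiff.mp (by omega)) h

lemma len_g (hc : ∀ i j, R.cartan i j = if i = j then 2 else -2) :
    ∀ n : ℕ, R.cs.length (g0 R n) = n ∧ R.cs.length (g1 R n) = n := by
  intro n
  induction n with
  | zero => simp
  | succ n ih =>
      constructor
      · rw [g0_succ, length_mul_simple_of_pos R _ _ ?_, ih.2]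
        rw [simpleVec_zero]
        rcases Nat.even_or_odd n with ⟨k, hk⟩ | ⟨k, hk⟩
        · have hn : n = 2*k := by omega
          subst hn
          rw [(act_g R hc k).2.1]
          intro hle
          obtain ⟨hl1, hl2⟩ := vec_le_zero.mp hle
          push_cast at hl1 hl2
          omega
        · subst hk
          rw [(act_g R hc k).2.2.2]
          intro hle
          obtain ⟨hl1, hl2⟩ := vec_le_zero.mp hle
          push_cast at hl1 hl2
          omega
      · rw [g1_succ, length_mul_simple_of_pos R _ _ ?_, ih.1]
        rw [simpleVec_one]
        rcases Nat.even_or_odd n with ⟨k, hk⟩ | ⟨k, hk⟩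
        · have hn : n = 2*k := by omega
          subst hn
          rw [(act_g R hc k).1]
          intro hle
          obtain ⟨hl1, hl2⟩ := vec_le_zero.mp hle
          push_cast at hl1 hl2
          omega
        · subst hk
          rw [(act_g R hc k).2.2.1]
          intro hle
          obtain ⟨hl1, hl2⟩ := vec_le_zero.mp hle
          push_cast at hl1 hl2
          omega

/-! ### Prepend relations -/

lemma prepend : ∀ k : ℕ,
    g0 R (2*k+1) = R.cs.simple 0 * g0 R (2*k) ∧
    g1 R (2*k+1) = R.cs.simple 1 * g1 R (2*k) ∧
    g0 R (2*k+2) = R.cs.simple 1 * g0 R (2*k+1) ∧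
    g1 R (2*k+2) = R.cs.simple 0 * g1 R (2*k+1) := by
  intro k
  induction k with
  | zero =>
      refine ⟨?_, ?_, ?_, ?_⟩ <;>
        simp [g0_succ, g1_succ, mul_assoc]
  | succ k ih =>
      obtain ⟨p0o, p1o, p0e, p1e⟩ := ih
      have q0o : g0 R (2*(k+1)+1) = R.cs.simple 0 * g0 R (2*(k+1)) := by
        rw [show 2*(k+1)+1 = (2*k+2)+1 from by ring, show 2*(k+1) = 2*k+2 from by ring,
          g0_succ, p1e, mul_assoc, ← g0_succ]
      have q1o : g1 R (2*(k+1)+1) = R.cs.simple 1 * g1 R (2*(k+1)) := by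
        rw [show 2*(k+1)+1 = (2*k+2)+1 from by ring, show 2*(k+1) = 2*k+2 from by ring,
          g1_succ, p0e, mul_assoc, ← g1_succ]
      have q0e : g0 R (2*(k+1)+2) = R.cs.simple 1 * g0 R (2*(k+1)+1) := by
        rw [show 2*(k+1)+2 = (2*(k+1)+1)+1 from rfl, g0_succ, q1o, mul_assoc, ← g0_succ]
      have q1e : g1 R (2*(k+1)+2) = R.cs.simple 0 * g1 R (2*(k+1)+1) := by
        rw [show 2*(k+1)+2 = (2*(k+1)+1)+1 from rfl, g1_succ, q0o, mul_assoc, ← g1_succ]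
      exact ⟨q0o, q1o, q0e, q1e⟩

lemma p0o (k : ℕ) : g0 R (2*k+1) = R.cs.simple 0 * g0 R (2*k) := (prepend R k).1
lemma p1o (k : ℕ) : g1 R (2*k+1) = R.cs.simple 1 * g1 R (2*k) := (prepend R k).2.1
lemma p0e (k : ℕ) : g0 R (2*k+2) = R.cs.simple 1 * g0 R (2*k+1) := (prepend R k).2.2.1
lemma p1e (k : ℕ) : g1 R (2*k+2) = R.cs.simple 0 * g1 R (2*k+1) := (prepend R k).2.2.2

/-! ### Positive roots -/

lemma root_data (hc : ∀ i j, R.cartan i j = if i = j then 2 else -2) : ∀ k : ℕ,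
    R.IsPosRoot (vec (k+1) k) ∧ R.IsPosRoot (vec k (k+1)) ∧
    R.refl (vec (k+1) k) = g0 R (2*k+1) ∧ R.refl (vec k (k+1)) = g1 R (2*k+1) := by
  intro k
  induction k with
  | zero =>
      have e0 : (vec ((0:ℕ)+1) (0:ℕ) : AffLat 1) = simpleVec 0 := by
        rw [simpleVec_zero]; exact vec_congr (by norm_num) (by norm_num)
      have e1 : (vec (0:ℕ) ((0:ℕ)+1) : AffLat 1) = simpleVec 1 := by
        rw [simpleVec_one]; exact vec_congr (by norm_num) (by norm_num)
      refine ⟨?_, ?_, ?_, ?_⟩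
      · rw [e0]; exact posRoot_simpleVec R 0
      · rw [e1]; exact posRoot_simpleVec R 1
      · rw [e0, R.refl_simple, show (2*0+1 : ℕ) = 0+1 from rfl, g0_succ, g1_zero, one_mul]
      · rw [e1, R.refl_simple, show (2*0+1 : ℕ) = 0+1 from rfl, g1_succ, g0_zero, one_mul]
  | succ k ih =>
      obtain ⟨⟨⟨w1, i1, hw1⟩, -⟩, ⟨⟨w2, i2, hw2⟩, hge2⟩, hr1, hr2⟩ := ih
      have key1 : (vec ((k+1:ℕ)+1) (k+1:ℕ) : AffLat 1)
          = R.actR (R.cs.simple 0) (vec (k:ℕ) ((k:ℕ)+1)) := by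
        rw [actR_s0 R hc]
        exact vec_congr (by push_cast; ring) (by push_cast; ring)
      have key2 : (vec (k+1:ℕ) ((k+1:ℕ)+1) : AffLat 1)
          = R.actR (R.cs.simple 1) (vec ((k:ℕ)+1) (k:ℕ)) := by
        rw [actR_s1 R hc]
        exact vec_congr (by push_cast; ring) (by push_cast; ring)
      refine ⟨⟨⟨R.cs.simple 0 * w2, i2, ?_⟩, ?_⟩, ⟨⟨R.cs.simple 1 * w1, i1, ?_⟩, ?_⟩, ?_, ?_⟩
      · rw [R.actR_mul, ← hw2, ← key1]
      · apply zero_le_vec.mpr; constructor <;> push_cast <;> omega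
      · rw [R.actR_mul, ← hw1, ← key2]
      · apply zero_le_vec.mpr; constructor <;> push_cast <;> omega
      · rw [key1, R.refl_act, hr2, R.cs.inv_simple,
          show 2*(k+1)+1 = (2*k+2)+1 from by ring, g0_succ, p1e]
      · rw [key2, R.refl_act, hr1, R.cs.inv_simple,
          show 2*(k+1)+1 = (2*k+2)+1 from by ring, g1_succ, p0e]

lemma diff_pm (hc : ∀ i j, R.cartan i j = if i = j then 2 else -2)
    (w : W) (a : AffLat 1) (h : a 0 - a 1 = 1 ∨ a 0 - a 1 = -1) :
    R.actR w a 0 - R.actR w a 1 = 1 ∨ R.actR w a 0 - R.actR w a 1 = -1 := by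
  induction w using R.cs.simple_induction generalizing a with
  | one => rwa [R.actR_one]
  | simple i =>
      have h0 : ∀ b : AffLat 1, (b 0 - b 1 = 1 ∨ b 0 - b 1 = -1) →
          (R.actR (R.cs.simple 0) b 0 - R.actR (R.cs.simple 0) b 1 = 1 ∨
           R.actR (R.cs.simple 0) b 0 - R.actR (R.cs.simple 0) b 1 = -1) := by
        intro b hb
        rw [vec_eta b, actR_s0 R hc, vec_app0, vec_app1]
        omega
      have h1 : ∀ b : AffLat 1, (b 0 - b 1 = 1 ∨ b 0 - b 1 = -1) →
          (R.actR (R.cs.simple 1) b 0 - R.actR (R.cs.simple 1) b 1 = 1 ∨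
           R.actR (R.cs.simple 1) b 0 - R.actR (R.cs.simple 1) b 1 = -1) := by
        intro b hb
        rw [vec_eta b, actR_s1 R hc, vec_app0, vec_app1]
        omega
      fin_cases i
      · exact h0 a h
      · exact h1 a h
  | mul u v hu hv => rw [R.actR_mul]; exact hu _ (hv _ h)

lemma posRoot_cases (hc : ∀ i j, R.cartan i j = if i = j then 2 else -2)
    {a : AffLat 1} (h : R.IsPosRoot a) :
    ∃ k : ℕ, a = vec (k+1) k ∨ a = vec k (k+1) := by
  obtain ⟨⟨w, i, rfl⟩, hge⟩ := h
  have hb0 : (simpleVec (0 : Fin 2) : AffLat 1) 0 - simpleVec (0 : Fin 2) 1 = 1 := by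
    rw [simpleVec_zero]; norm_num
  have hb1 : (simpleVec (1 : Fin 2) : AffLat 1) 0 - simpleVec (1 : Fin 2) 1 = -1 := by
    rw [simpleVec_one]; norm_num
  have hbase : simpleVec i 0 - simpleVec i 1 = 1 ∨ simpleVec i 0 - simpleVec i 1 = -1 := by
    fin_cases i
    · exact Or.inl hb0
    · exact Or.inr hb1
  have hd := diff_pm R hc w (simpleVec i) hbase
  have h0 : (0:ℤ) ≤ R.actR w (simpleVec i) 0 := hge 0
  have h1 : (0:ℤ) ≤ R.actR w (simpleVec i) 1 := hge 1
  rcases hd with h2 | h2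
  · exact ⟨(R.actR w (simpleVec i) 1).toNat,
      Or.inl ((vec_eta _).trans (vec_congr (by omega) (by omega)))⟩
  · exact ⟨(R.actR w (simpleVec i) 0).toNat,
      Or.inr ((vec_eta _).trans (vec_congr (by omega) (by omega)))⟩


/-! ### Small word identities -/

lemma simple_cancel (i : Fin 2) (x : W) :
    R.cs.simple i * (R.cs.simple i * x) = x := by
  rw [← mul_assoc, R.cs.simple_mul_simple_self, one_mul]

lemma g0_one : g0 R 1 = R.cs.simple 0 := by rw [g0_succ, g1_zero, one_mul]
lemma g1_one : g1 R 1 = R.cs.simple 1 := by rw [g1_succ, g0_zero, one_mul]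
lemma g0_two : g0 R 2 = R.cs.simple 1 * g0 R 1 := p0e R 0
lemma g1_two : g1 R 2 = R.cs.simple 0 * R.cs.simple 1 := by
  rw [show g1 R 2 = R.cs.simple 0 * g1 R 1 from p1e R 0, g1_one]
lemma g0_three : g0 R 3 = R.cs.simple 0 * g0 R 2 := p0o R 1
lemma g1_three : g1 R 3 = R.cs.simple 1 * g1 R 2 := p1o R 1

lemma prod11 (k : ℕ) : g1 R 2 * g0 R (2*k+1) = g0 R (2*k+3) := by
  have e1 : g0 R (2*k+3) = R.cs.simple 0 * g0 R (2*k+2) := p0o R (k+1)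
  have e2 : g0 R (2*k+2) = R.cs.simple 1 * g0 R (2*k+1) := p0e R k
  rw [g1_two, e1, e2, mul_assoc]

lemma prod12 (k : ℕ) : g1 R 2 * g1 R (2*k+3) = g1 R (2*k+1) := by
  have e1 : g1 R (2*k+3) = R.cs.simple 1 * g1 R (2*k+2) := p1o R (k+1)
  have e2 : g1 R (2*k+2) = R.cs.simple 0 * g1 R (2*k+1) := p1e R k
  rw [g1_two, e1, e2, mul_assoc, simple_cancel, simple_cancel]

lemma prod12' : g1 R 2 * g1 R 1 = g0 R 1 := by
  rw [g1_two, g1_one, g0_one, mul_assoc, R.cs.simple_mul_simple_self, mul_one]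

lemma prod21 (k : ℕ) : g1 R 3 * g0 R (2*k+1) = g0 R (2*k+4) := by
  have e1 : g0 R (2*k+4) = R.cs.simple 1 * g0 R (2*k+3) := p0e R (k+1)
  rw [g1_three, mul_assoc, prod11, ← e1]

lemma prod22 (k : ℕ) : g1 R 3 * g1 R (2*k+3) = g1 R (2*k) := by
  rw [g1_three, mul_assoc, prod12, p1o R k, simple_cancel]

lemma prod22' : g1 R 3 * g1 R 1 = g0 R 2 := by
  rw [g1_three, mul_assoc, prod12', g0_two]

lemma prod31 (k : ℕ) : g0 R 1 * g0 R (2*k+1) = g0 R (2*k) := by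
  rw [g0_one, p0o R k, simple_cancel]

lemma prod32 (k : ℕ) : g0 R 1 * g1 R (2*k+1) = g1 R (2*k+2) := by
  rw [g0_one]; exact (p1e R k).symm

lemma prod_u4a : g0 R 3 * g1 R 2 = g0 R 1 := by
  rw [g0_three, g0_two, g0_one, g1_two]
  simp only [mul_assoc]
  rw [simple_cancel, R.cs.simple_mul_simple_self, mul_one]

lemma prod41 (k : ℕ) : g0 R 3 * g0 R (2*k+3) = g0 R (2*k) := by
  rw [← prod11 R k, ← mul_assoc, prod_u4a, prod31]

lemma prod41' : g0 R 3 * g0 R 1 = g1 R 2 := by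
  rw [g0_three, g0_two, g0_one, g1_two]
  simp only [mul_assoc]
  rw [R.cs.simple_mul_simple_self, mul_one]

lemma prod42 (k : ℕ) : g0 R 3 * g1 R (2*k+1) = g1 R (2*k+4) := by
  have e1 : g1 R (2*k+4) = R.cs.simple 0 * g1 R (2*k+3) := p1e R (k+1)
  have e2 : g1 R (2*k+3) = R.cs.simple 1 * g1 R (2*k+2) := p1o R (k+1)
  have e3 : g1 R (2*k+2) = R.cs.simple 0 * g1 R (2*k+1) := p1e R k
  rw [g0_three, g0_two, g0_one, e1, e2, e3]
  simp only [mul_assoc]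

/-! ### Specific positive roots -/

lemma len_g0 (hc : ∀ i j, R.cartan i j = if i = j then 2 else -2) (n : ℕ) :
    R.cs.length (g0 R n) = n := (len_g R hc n).1

lemma len_g1 (hc : ∀ i j, R.cartan i j = if i = j then 2 else -2) (n : ℕ) :
    R.cs.length (g1 R n) = n := (len_g R hc n).2

lemma pr_10 (hc : ∀ i j, R.cartan i j = if i = j then 2 else -2) : R.IsPosRoot (vec 1 0) := by
  have h := (root_data R hc 0).1; norm_num at h; exact h

lemma pr_01 (hc : ∀ i j, R.cartan i j = if i = j then 2 else -2) : R.IsPosRoot (vec 0 1) := by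
  have h := (root_data R hc 0).2.1; norm_num at h; exact h

lemma pr_21 (hc : ∀ i j, R.cartan i j = if i = j then 2 else -2) : R.IsPosRoot (vec 2 1) := by
  have h := (root_data R hc 1).1; norm_num at h; exact h

lemma pr_23 (hc : ∀ i j, R.cartan i j = if i = j then 2 else -2) : R.IsPosRoot (vec 2 3) := by
  have h := (root_data R hc 2).2.1; norm_num at h; exact h

lemma pr_43 (hc : ∀ i j, R.cartan i j = if i = j then 2 else -2) : R.IsPosRoot (vec 4 3) := by
  have h := (root_data R hc 3).1; norm_num at h; exact h

lemma pr_34 (hc : ∀ i j, R.cartan i j = if i = j then 2 else -2) : R.IsPosRoot (vec 3 4) := by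
  have h := (root_data R hc 3).2.1; norm_num at h; exact h

lemma refl_10 (hc : ∀ i j, R.cartan i j = if i = j then 2 else -2) : R.refl (vec 1 0) = g0 R 1 := by
  have h := (root_data R hc 0).2.2.1; norm_num at h; exact h

lemma refl_01 (hc : ∀ i j, R.cartan i j = if i = j then 2 else -2) : R.refl (vec 0 1) = g1 R 1 := by
  have h := (root_data R hc 0).2.2.2; norm_num at h; exact h

lemma refl_21 (hc : ∀ i j, R.cartan i j = if i = j then 2 else -2) : R.refl (vec 2 1) = g0 R 3 := by
  have h := (root_data R hc 1).2.2.1; norm_num at h; exact h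

lemma refl_23 (hc : ∀ i j, R.cartan i j = if i = j then 2 else -2) : R.refl (vec 2 3) = g1 R 5 := by
  have h := (root_data R hc 2).2.2.2; norm_num at h; exact h

lemma refl_43 (hc : ∀ i j, R.cartan i j = if i = j then 2 else -2) : R.refl (vec 4 3) = g0 R 7 := by
  have h := (root_data R hc 3).2.2.1; norm_num at h; exact h

lemma refl_34 (hc : ∀ i j, R.cartan i j = if i = j then 2 else -2) : R.refl (vec 3 4) = g1 R 7 := by
  have h := (root_data R hc 3).2.2.2; norm_num at h; exact h

lemma qMono_10 : qMono (vec 1 0) = MvPolynomial.X 0 := by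
  simp [qMono, Fin.prod_univ_two, vec]

lemma qMono_01 : qMono (vec 0 1) = MvPolynomial.X 1 := by
  simp [qMono, Fin.prod_univ_two, vec]

/-! ### Term evaluation -/

lemma eps_self (u : W) : eps u u = 1 := if_pos rfl

lemma term_cl (u v : W) (i : Fin 2) {a : AffLat 1} (hpos : R.IsPosRoot a)
    (hlen : R.cs.length (u * R.refl a) = R.cs.length u + 1) :
    (if R.IsPosRoot a ∧ R.cs.length v = R.cs.length (v * R.refl a) + 1
      then (R.coroot a i) • eps u (v * R.refl a) else 0)
    = (R.coroot a i) • eps (u * R.refl a) v := by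
  by_cases hv : v = u * R.refl a
  · subst hv
    have hv2 : u * R.refl a * R.refl a = u := by
      rw [mul_assoc, refl_sq R hpos, mul_one]
    rw [if_pos ⟨hpos, by rw [hv2]; exact hlen⟩, hv2]
    simp only [eps, if_pos rfl]
  · have h2 : v * R.refl a ≠ u := fun h =>
      hv (by rw [← h, mul_assoc, refl_sq R hpos, mul_one])
    simp only [eps, if_neg h2, if_neg hv, smul_zero, ite_self]

lemma term_q (u v : W) (i : Fin 2) {a : AffLat 1} (hpos : R.IsPosRoot a)
    (hlen : (R.cs.length (u * R.refl a) : ℤ)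
      = (R.cs.length u : ℤ) + 1 - 2 * htv (R.coroot a)) :
    (if R.IsPosRoot a ∧ (R.cs.length v : ℤ)
        = (R.cs.length (v * R.refl a) : ℤ) + 1 - 2 * htv (R.coroot a)
      then (R.coroot a i) • (qMono (R.coroot a) * eps u (v * R.refl a)) else 0)
    = (R.coroot a i) • (qMono (R.coroot a) * eps (u * R.refl a) v) := by
  by_cases hv : v = u * R.refl a
  · subst hv
    have hv2 : u * R.refl a * R.refl a = u := by
      rw [mul_assoc, refl_sq R hpos, mul_one]
    rw [if_pos ⟨hpos, by rw [hv2]; exact hlen⟩, hv2]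
    simp only [eps, if_pos rfl]
  · have h2 : v * R.refl a ≠ u := fun h =>
      hv (by rw [← h, mul_assoc, refl_sq R hpos, mul_one])
    simp only [eps, if_neg h2, if_neg hv, mul_zero, smul_zero, ite_self]

/-! ### Generic evaluation of `Lam` on a Schubert class -/

lemma lam_eps_eval (u : W) (i : Fin 2) (Scl Sq : Finset (AffLat 1))
    (hcl : ∀ a : AffLat 1,
      (R.IsPosRoot a ∧ R.cs.length (u * R.refl a) = R.cs.length u + 1) ↔ a ∈ Scl)
    (hq : ∀ a : AffLat 1, (R.IsPosRoot a ∧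
        (R.cs.length (u * R.refl a) : ℤ)
          = (R.cs.length u : ℤ) + 1 - 2 * htv (R.coroot a)) ↔ a ∈ Sq) :
    R.Lam i (eps u) = fun v =>
      (∑ a ∈ Scl, (R.coroot a i) • eps (u * R.refl a) v)
      + (∑ a ∈ Sq, (R.coroot a i) • (qMono (R.coroot a) * eps (u * R.refl a) v)) := by
  funext v
  simp only [AffineRootSystem.Lam]
  congr 1
  · rw [finsum_eq_sum_of_support_subset _ (s := Scl) ?_]
    · exact Finset.sum_congr rfl fun a ha =>
        term_cl R u v i ((hcl a).mpr ha).1 ((hcl a).mpr ha).2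
    · intro a ha
      simp only [Function.mem_support] at ha
      have hcond : R.IsPosRoot a ∧ R.cs.length v = R.cs.length (v * R.refl a) + 1 := by
        by_contra h; rw [if_neg h] at ha; exact ha rfl
      obtain ⟨hpos, hlv⟩ := hcond
      rw [if_pos ⟨hpos, hlv⟩] at ha
      have hvu : v * R.refl a = u := by
        by_contra h
        rw [show eps u (v * R.refl a) = 0 from if_neg h, smul_zero] at ha
        exact ha rfl
      have hv : v = u * R.refl a := by
        rw [← hvu, mul_assoc, refl_sq R hpos, mul_one]
      rw [hvu] at hlv
      exact (hcl a).mp ⟨hpos, by rw [← hv]; exact hlv⟩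
  · rw [finsum_eq_sum_of_support_subset _ (s := Sq) ?_]
    · exact Finset.sum_congr rfl fun a ha =>
        term_q R u v i ((hq a).mpr ha).1 ((hq a).mpr ha).2
    · intro a ha
      simp only [Function.mem_support] at ha
      have hcond : R.IsPosRoot a ∧ (R.cs.length v : ℤ)
          = (R.cs.length (v * R.refl a) : ℤ) + 1 - 2 * htv (R.coroot a) := by
        by_contra h; rw [if_neg h] at ha; exact ha rfl
      obtain ⟨hpos, hlv⟩ := hcond
      rw [if_pos ⟨hpos, hlv⟩] at ha
      have hvu : v * R.refl a = u := by
        by_contra h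
        rw [show eps u (v * R.refl a) = 0 from if_neg h, mul_zero, smul_zero] at ha
        exact ha rfl
      have hv : v = u * R.refl a := by
        rw [← hvu, mul_assoc, refl_sq R hpos, mul_one]
      rw [hvu] at hlv
      exact (hq a).mp ⟨hpos, by rw [← hv]; exact hlv⟩

/-! ### Support finiteness and linearity of `Lam` -/

lemma support_cl_finite (hc : ∀ i j, R.cartan i j = if i = j then 2 else -2)
    (i : Fin 2) (f : W → MvPolynomial (Fin 2) ℤ) (v : W) :
    (Function.support fun a : AffLat 1 =>
      if R.IsPosRoot a ∧ R.cs.length v = R.cs.length (v * R.refl a) + 1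
      then (R.coroot a i) • f (v * R.refl a) else 0).Finite := by
  set L := R.cs.length v with hL
  apply Set.Finite.subset
    (((Finset.range (L+1)).image (fun k : ℕ => vec ((k:ℤ)+1) (k:ℤ)) ∪
      (Finset.range (L+1)).image (fun k : ℕ => vec (k:ℤ) ((k:ℤ)+1))) :
      Finset (AffLat 1)).finite_toSet
  intro a ha
  simp only [Function.mem_support] at ha
  have hcond : R.IsPosRoot a ∧ R.cs.length v = R.cs.length (v * R.refl a) + 1 := by
    by_contra h; rw [if_neg h] at ha; exact ha rfl
  obtain ⟨hpos, hlv⟩ := hcond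
  have htri : R.cs.length (R.refl a) ≤ R.cs.length v + R.cs.length (v * R.refl a) := by
    have e : v⁻¹ * (v * R.refl a) = R.refl a := by group
    have h := R.cs.length_mul_le v⁻¹ (v * R.refl a)
    rwa [e, R.cs.length_inv] at h
  obtain ⟨k, hk | hk⟩ := posRoot_cases R hc hpos
  · have hlr : R.cs.length (R.refl a) = 2*k+1 := by
      rw [hk, (root_data R hc k).2.2.1, len_g0 R hc]
    simp only [Finset.coe_union, Set.mem_union, Finset.coe_image, Set.mem_image,
      Finset.mem_coe, Finset.mem_range]
    exact Or.inl ⟨k, by omega, hk.symm⟩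
  · have hlr : R.cs.length (R.refl a) = 2*k+1 := by
      rw [hk, (root_data R hc k).2.2.2, len_g1 R hc]
    simp only [Finset.coe_union, Set.mem_union, Finset.coe_image, Set.mem_image,
      Finset.mem_coe, Finset.mem_range]
    exact Or.inr ⟨k, by omega, hk.symm⟩

lemma support_q_finite (hc : ∀ i j, R.cartan i j = if i = j then 2 else -2)
    (i : Fin 2) (f : W → MvPolynomial (Fin 2) ℤ) (v : W) :
    (Function.support fun a : AffLat 1 =>
      if R.IsPosRoot a ∧ (R.cs.length v : ℤ)
          = (R.cs.length (v * R.refl a) : ℤ) + 1 - 2 * htv (R.coroot a)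
      then (R.coroot a i) • (qMono (R.coroot a) * f (v * R.refl a)) else 0).Finite := by
  set L := R.cs.length v with hL
  apply Set.Finite.subset
    (((Finset.range (L+1)).image (fun k : ℕ => vec ((k:ℤ)+1) (k:ℤ)) ∪
      (Finset.range (L+1)).image (fun k : ℕ => vec (k:ℤ) ((k:ℤ)+1))) :
      Finset (AffLat 1)).finite_toSet
  intro a ha
  simp only [Function.mem_support] at ha
  have hcond : R.IsPosRoot a ∧ (R.cs.length v : ℤ)
      = (R.cs.length (v * R.refl a) : ℤ) + 1 - 2 * htv (R.coroot a) := by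
    by_contra h; rw [if_neg h] at ha; exact ha rfl
  obtain ⟨hpos, hlv⟩ := hcond
  rw [coroot_eq_self R hc hpos] at hlv
  have htri : R.cs.length (v * R.refl a) ≤ R.cs.length v + R.cs.length (R.refl a) :=
    R.cs.length_mul_le v (R.refl a)
  obtain ⟨k, hk | hk⟩ := posRoot_cases R hc hpos
  · have hlr : R.cs.length (R.refl a) = 2*k+1 := by
      rw [hk, (root_data R hc k).2.2.1, len_g0 R hc]
    have hhv : htv a = 2*(k:ℤ)+1 := by rw [hk, htv_vec]; ring
    rw [hhv] at hlv
    simp only [Finset.coe_union, Set.mem_union, Finset.coe_image, Set.mem_image,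
      Finset.mem_coe, Finset.mem_range]
    exact Or.inl ⟨k, by omega, hk.symm⟩
  · have hlr : R.cs.length (R.refl a) = 2*k+1 := by
      rw [hk, (root_data R hc k).2.2.2, len_g1 R hc]
    have hhv : htv a = 2*(k:ℤ)+1 := by rw [hk, htv_vec]; ring
    rw [hhv] at hlv
    simp only [Finset.coe_union, Set.mem_union, Finset.coe_image, Set.mem_image,
      Finset.mem_coe, Finset.mem_range]
    exact Or.inr ⟨k, by omega, hk.symm⟩

lemma Lam_add (hc : ∀ i j, R.cartan i j = if i = j then 2 else -2)
    (i : Fin 2) (f g : W → MvPolynomial (Fin 2) ℤ) :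
    R.Lam i (fun v => f v + g v) = fun v => R.Lam i f v + R.Lam i g v := by
  funext v
  simp only [AffineRootSystem.Lam]
  have e1 : (fun a : AffLat 1 =>
      if R.IsPosRoot a ∧ R.cs.length v = R.cs.length (v * R.refl a) + 1
      then (R.coroot a i) • (f (v * R.refl a) + g (v * R.refl a)) else 0)
      = fun a : AffLat 1 =>
        (if R.IsPosRoot a ∧ R.cs.length v = R.cs.length (v * R.refl a) + 1
          then (R.coroot a i) • f (v * R.refl a) else 0)
        + (if R.IsPosRoot a ∧ R.cs.length v = R.cs.length (v * R.refl a) + 1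
          then (R.coroot a i) • g (v * R.refl a) else 0) := by
    funext a; split
    · rw [smul_add]
    · rw [add_zero]
  have e2 : (fun a : AffLat 1 =>
      if R.IsPosRoot a ∧ (R.cs.length v : ℤ)
          = (R.cs.length (v * R.refl a) : ℤ) + 1 - 2 * htv (R.coroot a)
      then (R.coroot a i) • (qMono (R.coroot a) * (f (v * R.refl a) + g (v * R.refl a))) else 0)
      = fun a : AffLat 1 =>
        (if R.IsPosRoot a ∧ (R.cs.length v : ℤ)
            = (R.cs.length (v * R.refl a) : ℤ) + 1 - 2 * htv (R.coroot a)
          then (R.coroot a i) • (qMono (R.coroot a) * f (v * R.refl a)) else 0)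
        + (if R.IsPosRoot a ∧ (R.cs.length v : ℤ)
            = (R.cs.length (v * R.refl a) : ℤ) + 1 - 2 * htv (R.coroot a)
          then (R.coroot a i) • (qMono (R.coroot a) * g (v * R.refl a)) else 0) := by
    funext a; split
    · rw [mul_add, smul_add]
    · rw [add_zero]
  rw [e1, e2, finsum_add_distrib (support_cl_finite R hc i f v) (support_cl_finite R hc i g v),
    finsum_add_distrib (support_q_finite R hc i f v) (support_q_finite R hc i g v)]
  ring

lemma Lam_zsmul (hc : ∀ i j, R.cartan i j = if i = j then 2 else -2)
    (i : Fin 2) (c : ℤ) (f : W → MvPolynomial (Fin 2) ℤ) :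
    R.Lam i (fun v => c • f v) = fun v => c • R.Lam i f v := by
  funext v
  simp only [AffineRootSystem.Lam]
  have e1 : (fun a : AffLat 1 =>
      if R.IsPosRoot a ∧ R.cs.length v = R.cs.length (v * R.refl a) + 1
      then (R.coroot a i) • (c • f (v * R.refl a)) else 0)
      = fun a : AffLat 1 => c •
        (if R.IsPosRoot a ∧ R.cs.length v = R.cs.length (v * R.refl a) + 1
          then (R.coroot a i) • f (v * R.refl a) else 0) := by
    funext a; split
    · rw [smul_comm]
    · rw [smul_zero]
  have e2 : (fun a : AffLat 1 =>
      if R.IsPosRoot a ∧ (R.cs.length v : ℤ)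
          = (R.cs.length (v * R.refl a) : ℤ) + 1 - 2 * htv (R.coroot a)
      then (R.coroot a i) • (qMono (R.coroot a) * (c • f (v * R.refl a))) else 0)
      = fun a : AffLat 1 => c •
        (if R.IsPosRoot a ∧ (R.cs.length v : ℤ)
            = (R.cs.length (v * R.refl a) : ℤ) + 1 - 2 * htv (R.coroot a)
          then (R.coroot a i) • (qMono (R.coroot a) * f (v * R.refl a)) else 0) := by
    funext a; split
    · rw [mul_smul_comm, smul_comm]
    · rw [smul_zero]
  rw [e1, e2, ← smul_finsum' c (support_cl_finite R hc i f v),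
    ← smul_finsum' c (support_q_finite R hc i f v), smul_add]

lemma Lam_mulX (hc : ∀ i j, R.cartan i j = if i = j then 2 else -2)
    (i : Fin 2) (p : MvPolynomial (Fin 2) ℤ) (f : W → MvPolynomial (Fin 2) ℤ) :
    R.Lam i (fun v => p * f v) = fun v => p * R.Lam i f v := by
  funext v
  simp only [AffineRootSystem.Lam]
  have e1 : (fun a : AffLat 1 =>
      if R.IsPosRoot a ∧ R.cs.length v = R.cs.length (v * R.refl a) + 1
      then (R.coroot a i) • (p * f (v * R.refl a)) else 0)
      = fun a : AffLat 1 => p •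
        (if R.IsPosRoot a ∧ R.cs.length v = R.cs.length (v * R.refl a) + 1
          then (R.coroot a i) • f (v * R.refl a) else 0) := by
    funext a; split
    · rw [smul_eq_mul, mul_smul_comm]
    · rw [smul_zero]
  have e2 : (fun a : AffLat 1 =>
      if R.IsPosRoot a ∧ (R.cs.length v : ℤ)
          = (R.cs.length (v * R.refl a) : ℤ) + 1 - 2 * htv (R.coroot a)
      then (R.coroot a i) • (qMono (R.coroot a) * (p * f (v * R.refl a))) else 0)
      = fun a : AffLat 1 => p •
        (if R.IsPosRoot a ∧ (R.cs.length v : ℤ)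
            = (R.cs.length (v * R.refl a) : ℤ) + 1 - 2 * htv (R.coroot a)
          then (R.coroot a i) • (qMono (R.coroot a) * f (v * R.refl a)) else 0) := by
    funext a; split
    · rw [smul_eq_mul, mul_smul_comm]
      congr 1
      ring
    · rw [smul_zero]
  rw [e1, e2, ← smul_finsum' p (support_cl_finite R hc i f v),
    ← smul_finsum' p (support_q_finite R hc i f v), smul_eq_mul, smul_eq_mul, mul_add]


/-! ### Classification of contributing roots for the four relevant `u` -/

lemma vec_ne_fst {x y x' y' : ℤ} (h : x ≠ x') : vec x y ≠ vec x' y' :=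
  fun he => h (vec_inj he).1

section Classify

variable (hc : ∀ i j, R.cartan i j = if i = j then 2 else -2)

include hc

lemma hcl_u1 (a : AffLat 1) :
    (R.IsPosRoot a ∧ R.cs.length (g1 R 2 * R.refl a) = R.cs.length (g1 R 2) + 1)
    ↔ a ∈ ({vec 1 0, vec 2 3} : Finset (AffLat 1)) := by
  constructor
  · rintro ⟨hpos, hlen⟩
    rw [len_g1 R hc 2] at hlen
    obtain ⟨k, hk | hk⟩ := posRoot_cases R hc hpos
    · rw [hk, (root_data R hc k).2.2.1, prod11, len_g0 R hc] at hlen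
      have hk0 : k = 0 := by omega
      subst hk0
      simp only [Finset.mem_insert, Finset.mem_singleton]
      left; rw [hk]; exact vec_congr (by norm_num) (by norm_num)
    · rw [hk, (root_data R hc k).2.2.2] at hlen
      rcases Nat.eq_zero_or_pos k with rfl | hkpos
      · rw [show (2*0+1 : ℕ) = 1 from rfl, prod12', len_g0 R hc] at hlen
        exfalso; omega
      · obtain ⟨k', rfl⟩ : ∃ k', k = k'+1 := ⟨k-1, by omega⟩
        rw [show 2*(k'+1)+1 = 2*k'+3 from by ring, prod12, len_g1 R hc] at hlen
        have hk1 : k' = 1 := by omega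
        subst hk1
        simp only [Finset.mem_insert, Finset.mem_singleton]
        right; rw [hk]; exact vec_congr (by norm_num) (by norm_num)
  · intro ha
    rcases Finset.mem_insert.mp ha with rfl | ha
    · refine ⟨pr_10 R hc, ?_⟩
      rw [refl_10 R hc, (prod11 R 0 : g1 R 2 * g0 R 1 = g0 R 3), len_g0 R hc, len_g1 R hc]
    · rw [Finset.mem_singleton] at ha; subst ha
      refine ⟨pr_23 R hc, ?_⟩
      rw [refl_23 R hc, (prod12 R 1 : g1 R 2 * g1 R 5 = g1 R 3), len_g1 R hc, len_g1 R hc]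

lemma hq_u1 (a : AffLat 1) :
    (R.IsPosRoot a ∧ (R.cs.length (g1 R 2 * R.refl a) : ℤ)
      = (R.cs.length (g1 R 2) : ℤ) + 1 - 2 * htv (R.coroot a))
    ↔ a ∈ ({vec 0 1} : Finset (AffLat 1)) := by
  constructor
  · rintro ⟨hpos, hlen⟩
    rw [coroot_eq_self R hc hpos, len_g1 R hc 2] at hlen
    obtain ⟨k, hk | hk⟩ := posRoot_cases R hc hpos
    · rw [hk, (root_data R hc k).2.2.1, prod11, len_g0 R hc, htv_vec] at hlen
      exfalso; push_cast at hlen; omega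
    · rw [hk, (root_data R hc k).2.2.2, htv_vec] at hlen
      rcases Nat.eq_zero_or_pos k with rfl | hkpos
      · simp only [Finset.mem_singleton]
        rw [hk]; exact vec_congr (by norm_num) (by norm_num)
      · obtain ⟨k', rfl⟩ : ∃ k', k = k'+1 := ⟨k-1, by omega⟩
        rw [show 2*(k'+1)+1 = 2*k'+3 from by ring, prod12, len_g1 R hc] at hlen
        exfalso; push_cast at hlen; omega
  · intro ha
    rw [Finset.mem_singleton] at ha; subst ha
    refine ⟨pr_01 R hc, ?_⟩
    rw [coroot_eq_self R hc (pr_01 R hc), refl_01 R hc,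
      (prod12' R : g1 R 2 * g1 R 1 = g0 R 1), len_g0 R hc, len_g1 R hc, htv_vec]
    norm_num

lemma hcl_u2 (a : AffLat 1) :
    (R.IsPosRoot a ∧ R.cs.length (g1 R 3 * R.refl a) = R.cs.length (g1 R 3) + 1)
    ↔ a ∈ ({vec 1 0, vec 3 4} : Finset (AffLat 1)) := by
  constructor
  · rintro ⟨hpos, hlen⟩
    rw [len_g1 R hc 3] at hlen
    obtain ⟨k, hk | hk⟩ := posRoot_cases R hc hpos
    · rw [hk, (root_data R hc k).2.2.1, prod21, len_g0 R hc] at hlen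
      have hk0 : k = 0 := by omega
      subst hk0
      simp only [Finset.mem_insert, Finset.mem_singleton]
      left; rw [hk]; exact vec_congr (by norm_num) (by norm_num)
    · rw [hk, (root_data R hc k).2.2.2] at hlen
      rcases Nat.eq_zero_or_pos k with rfl | hkpos
      · rw [show (2*0+1 : ℕ) = 1 from rfl, prod22', len_g0 R hc] at hlen
        exfalso; omega
      · obtain ⟨k', rfl⟩ : ∃ k', k = k'+1 := ⟨k-1, by omega⟩
        rw [show 2*(k'+1)+1 = 2*k'+3 from by ring, prod22, len_g1 R hc] at hlen
        have hk1 : k' = 2 := by omega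
        subst hk1
        simp only [Finset.mem_insert, Finset.mem_singleton]
        right; rw [hk]; exact vec_congr (by norm_num) (by norm_num)
  · intro ha
    rcases Finset.mem_insert.mp ha with rfl | ha
    · refine ⟨pr_10 R hc, ?_⟩
      rw [refl_10 R hc, (prod21 R 0 : g1 R 3 * g0 R 1 = g0 R 4), len_g0 R hc, len_g1 R hc]
    · rw [Finset.mem_singleton] at ha; subst ha
      refine ⟨pr_34 R hc, ?_⟩
      rw [refl_34 R hc, (prod22 R 2 : g1 R 3 * g1 R 7 = g1 R 4), len_g1 R hc, len_g1 R hc]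

lemma hq_u2 (a : AffLat 1) :
    (R.IsPosRoot a ∧ (R.cs.length (g1 R 3 * R.refl a) : ℤ)
      = (R.cs.length (g1 R 3) : ℤ) + 1 - 2 * htv (R.coroot a))
    ↔ a ∈ ({vec 0 1} : Finset (AffLat 1)) := by
  constructor
  · rintro ⟨hpos, hlen⟩
    rw [coroot_eq_self R hc hpos, len_g1 R hc 3] at hlen
    obtain ⟨k, hk | hk⟩ := posRoot_cases R hc hpos
    · rw [hk, (root_data R hc k).2.2.1, prod21, len_g0 R hc, htv_vec] at hlen
      exfalso; push_cast at hlen; omega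
    · rw [hk, (root_data R hc k).2.2.2, htv_vec] at hlen
      rcases Nat.eq_zero_or_pos k with rfl | hkpos
      · simp only [Finset.mem_singleton]
        rw [hk]; exact vec_congr (by norm_num) (by norm_num)
      · obtain ⟨k', rfl⟩ : ∃ k', k = k'+1 := ⟨k-1, by omega⟩
        rw [show 2*(k'+1)+1 = 2*k'+3 from by ring, prod22, len_g1 R hc] at hlen
        exfalso; push_cast at hlen; omega
  · intro ha
    rw [Finset.mem_singleton] at ha; subst ha
    refine ⟨pr_01 R hc, ?_⟩
    rw [coroot_eq_self R hc (pr_01 R hc), refl_01 R hc,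
      (prod22' R : g1 R 3 * g1 R 1 = g0 R 2), len_g0 R hc, len_g1 R hc, htv_vec]
    norm_num

lemma hcl_u3 (a : AffLat 1) :
    (R.IsPosRoot a ∧ R.cs.length (g0 R 1 * R.refl a) = R.cs.length (g0 R 1) + 1)
    ↔ a ∈ ({vec 2 1, vec 0 1} : Finset (AffLat 1)) := by
  constructor
  · rintro ⟨hpos, hlen⟩
    rw [len_g0 R hc 1] at hlen
    obtain ⟨k, hk | hk⟩ := posRoot_cases R hc hpos
    · rw [hk, (root_data R hc k).2.2.1, prod31, len_g0 R hc] at hlen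
      have hk0 : k = 1 := by omega
      subst hk0
      simp only [Finset.mem_insert, Finset.mem_singleton]
      left; rw [hk]; exact vec_congr (by norm_num) (by norm_num)
    · rw [hk, (root_data R hc k).2.2.2, prod32, len_g1 R hc] at hlen
      have hk0 : k = 0 := by omega
      subst hk0
      simp only [Finset.mem_insert, Finset.mem_singleton]
      right; rw [hk]; exact vec_congr (by norm_num) (by norm_num)
  · intro ha
    rcases Finset.mem_insert.mp ha with rfl | ha
    · refine ⟨pr_21 R hc, ?_⟩
      rw [refl_21 R hc, (prod31 R 1 : g0 R 1 * g0 R 3 = g0 R 2), len_g0 R hc, len_g0 R hc]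
    · rw [Finset.mem_singleton] at ha; subst ha
      refine ⟨pr_01 R hc, ?_⟩
      rw [refl_01 R hc, (prod32 R 0 : g0 R 1 * g1 R 1 = g1 R 2), len_g1 R hc, len_g0 R hc]

lemma hq_u3 (a : AffLat 1) :
    (R.IsPosRoot a ∧ (R.cs.length (g0 R 1 * R.refl a) : ℤ)
      = (R.cs.length (g0 R 1) : ℤ) + 1 - 2 * htv (R.coroot a))
    ↔ a ∈ ({vec 1 0} : Finset (AffLat 1)) := by
  constructor
  · rintro ⟨hpos, hlen⟩
    rw [coroot_eq_self R hc hpos, len_g0 R hc 1] at hlen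
    obtain ⟨k, hk | hk⟩ := posRoot_cases R hc hpos
    · rw [hk, (root_data R hc k).2.2.1, prod31, len_g0 R hc, htv_vec] at hlen
      have hk0 : k = 0 := by push_cast at hlen; omega
      subst hk0
      simp only [Finset.mem_singleton]
      rw [hk]; exact vec_congr (by norm_num) (by norm_num)
    · rw [hk, (root_data R hc k).2.2.2, prod32, len_g1 R hc, htv_vec] at hlen
      exfalso; push_cast at hlen; omega
  · intro ha
    rw [Finset.mem_singleton] at ha; subst ha
    refine ⟨pr_10 R hc, ?_⟩
    rw [coroot_eq_self R hc (pr_10 R hc), refl_10 R hc,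
      (prod31 R 0 : g0 R 1 * g0 R 1 = g0 R 0), len_g0 R hc, len_g0 R hc, htv_vec]
    norm_num

lemma hcl_u4 (a : AffLat 1) :
    (R.IsPosRoot a ∧ R.cs.length (g0 R 3 * R.refl a) = R.cs.length (g0 R 3) + 1)
    ↔ a ∈ ({vec 4 3, vec 0 1} : Finset (AffLat 1)) := by
  constructor
  · rintro ⟨hpos, hlen⟩
    rw [len_g0 R hc 3] at hlen
    obtain ⟨k, hk | hk⟩ := posRoot_cases R hc hpos
    · rw [hk, (root_data R hc k).2.2.1] at hlen
      rcases Nat.eq_zero_or_pos k with rfl | hkpos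
      · rw [show (2*0+1 : ℕ) = 1 from rfl, prod41', len_g1 R hc] at hlen
        exfalso; omega
      · obtain ⟨k', rfl⟩ : ∃ k', k = k'+1 := ⟨k-1, by omega⟩
        rw [show 2*(k'+1)+1 = 2*k'+3 from by ring, prod41, len_g0 R hc] at hlen
        have hk1 : k' = 2 := by omega
        subst hk1
        simp only [Finset.mem_insert, Finset.mem_singleton]
        left; rw [hk]; exact vec_congr (by norm_num) (by norm_num)
    · rw [hk, (root_data R hc k).2.2.2, prod42, len_g1 R hc] at hlen
      have hk0 : k = 0 := by omega
      subst hk0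
      simp only [Finset.mem_insert, Finset.mem_singleton]
      right; rw [hk]; exact vec_congr (by norm_num) (by norm_num)
  · intro ha
    rcases Finset.mem_insert.mp ha with rfl | ha
    · refine ⟨pr_43 R hc, ?_⟩
      rw [refl_43 R hc, (prod41 R 2 : g0 R 3 * g0 R 7 = g0 R 4), len_g0 R hc, len_g0 R hc]
    · rw [Finset.mem_singleton] at ha; subst ha
      refine ⟨pr_01 R hc, ?_⟩
      rw [refl_01 R hc, (prod42 R 0 : g0 R 3 * g1 R 1 = g1 R 4), len_g1 R hc, len_g0 R hc]

lemma hq_u4 (a : AffLat 1) :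
    (R.IsPosRoot a ∧ (R.cs.length (g0 R 3 * R.refl a) : ℤ)
      = (R.cs.length (g0 R 3) : ℤ) + 1 - 2 * htv (R.coroot a))
    ↔ a ∈ ({vec 1 0} : Finset (AffLat 1)) := by
  constructor
  · rintro ⟨hpos, hlen⟩
    rw [coroot_eq_self R hc hpos, len_g0 R hc 3] at hlen
    obtain ⟨k, hk | hk⟩ := posRoot_cases R hc hpos
    · rw [hk, (root_data R hc k).2.2.1, htv_vec] at hlen
      rcases Nat.eq_zero_or_pos k with rfl | hkpos
      · simp only [Finset.mem_singleton]
        rw [hk]; exact vec_congr (by norm_num) (by norm_num)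
      · obtain ⟨k', rfl⟩ : ∃ k', k = k'+1 := ⟨k-1, by omega⟩
        rw [show 2*(k'+1)+1 = 2*k'+3 from by ring, prod41, len_g0 R hc] at hlen
        exfalso; push_cast at hlen; omega
    · rw [hk, (root_data R hc k).2.2.2, prod42, len_g1 R hc, htv_vec] at hlen
      exfalso; push_cast at hlen; omega
  · intro ha
    rw [Finset.mem_singleton] at ha; subst ha
    refine ⟨pr_10 R hc, ?_⟩
    rw [coroot_eq_self R hc (pr_10 R hc), refl_10 R hc,
      (prod41' R : g0 R 3 * g0 R 1 = g1 R 2), len_g1 R hc, len_g0 R hc, htv_vec]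
    norm_num

/-! ### The four `Lam`-evaluations -/

lemma lam1 (i : Fin 2) : R.Lam i (eps (g1 R 2)) = fun v =>
    (vec 1 0 i) • eps (g0 R 3) v + (vec 2 3 i) • eps (g1 R 3) v
      + (vec 0 1 i) • (MvPolynomial.X 1 * eps (g0 R 1) v) := by
  rw [lam_eps_eval R (g1 R 2) i {vec 1 0, vec 2 3} {vec 0 1} (hcl_u1 R hc) (hq_u1 R hc)]
  funext v
  rw [Finset.sum_insert (Finset.notMem_singleton.mpr (vec_ne_fst (by norm_num))),
    Finset.sum_singleton, Finset.sum_singleton,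
    coroot_eq_self R hc (pr_10 R hc), coroot_eq_self R hc (pr_23 R hc),
    coroot_eq_self R hc (pr_01 R hc),
    refl_10 R hc, refl_23 R hc, refl_01 R hc,
    (prod11 R 0 : g1 R 2 * g0 R 1 = g0 R 3), (prod12 R 1 : g1 R 2 * g1 R 5 = g1 R 3),
    (prod12' R : g1 R 2 * g1 R 1 = g0 R 1), qMono_01]

lemma lam2 (i : Fin 2) : R.Lam i (eps (g1 R 3)) = fun v =>
    (vec 1 0 i) • eps (g0 R 4) v + (vec 3 4 i) • eps (g1 R 4) v
      + (vec 0 1 i) • (MvPolynomial.X 1 * eps (g0 R 2) v) := by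
  rw [lam_eps_eval R (g1 R 3) i {vec 1 0, vec 3 4} {vec 0 1} (hcl_u2 R hc) (hq_u2 R hc)]
  funext v
  rw [Finset.sum_insert (Finset.notMem_singleton.mpr (vec_ne_fst (by norm_num))),
    Finset.sum_singleton, Finset.sum_singleton,
    coroot_eq_self R hc (pr_10 R hc), coroot_eq_self R hc (pr_34 R hc),
    coroot_eq_self R hc (pr_01 R hc),
    refl_10 R hc, refl_34 R hc, refl_01 R hc,
    (prod21 R 0 : g1 R 3 * g0 R 1 = g0 R 4), (prod22 R 2 : g1 R 3 * g1 R 7 = g1 R 4),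
    (prod22' R : g1 R 3 * g1 R 1 = g0 R 2), qMono_01]

lemma lam3 (i : Fin 2) : R.Lam i (eps (g0 R 1)) = fun v =>
    (vec 2 1 i) • eps (g0 R 2) v + (vec 0 1 i) • eps (g1 R 2) v
      + (vec 1 0 i) • (MvPolynomial.X 0 * eps (g0 R 0) v) := by
  rw [lam_eps_eval R (g0 R 1) i {vec 2 1, vec 0 1} {vec 1 0} (hcl_u3 R hc) (hq_u3 R hc)]
  funext v
  rw [Finset.sum_insert (Finset.notMem_singleton.mpr (vec_ne_fst (by norm_num))),
    Finset.sum_singleton, Finset.sum_singleton,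
    coroot_eq_self R hc (pr_21 R hc), coroot_eq_self R hc (pr_01 R hc),
    coroot_eq_self R hc (pr_10 R hc),
    refl_21 R hc, refl_01 R hc, refl_10 R hc,
    (prod31 R 1 : g0 R 1 * g0 R 3 = g0 R 2), (prod32 R 0 : g0 R 1 * g1 R 1 = g1 R 2),
    (prod31 R 0 : g0 R 1 * g0 R 1 = g0 R 0), qMono_10]

lemma lam4 (i : Fin 2) : R.Lam i (eps (g0 R 3)) = fun v =>
    (vec 4 3 i) • eps (g0 R 4) v + (vec 0 1 i) • eps (g1 R 4) v
      + (vec 1 0 i) • (MvPolynomial.X 0 * eps (g1 R 2) v) := by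
  rw [lam_eps_eval R (g0 R 3) i {vec 4 3, vec 0 1} {vec 1 0} (hcl_u4 R hc) (hq_u4 R hc)]
  funext v
  rw [Finset.sum_insert (Finset.notMem_singleton.mpr (vec_ne_fst (by norm_num))),
    Finset.sum_singleton, Finset.sum_singleton,
    coroot_eq_self R hc (pr_43 R hc), coroot_eq_self R hc (pr_01 R hc),
    coroot_eq_self R hc (pr_10 R hc),
    refl_43 R hc, refl_01 R hc, refl_10 R hc,
    (prod41 R 2 : g0 R 3 * g0 R 7 = g0 R 4), (prod42 R 0 : g0 R 3 * g1 R 1 = g1 R 4),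
    (prod41' R : g0 R 3 * g0 R 1 = g1 R 2), qMono_10]

end Classify


end Sl2Aux
/-- For `G = SL_2(ℂ)` (affine type `A_1^{(1)}`: affine Cartan
matrix with diagonal entries `2` and off-diagonal entries `-2`, the affine Weyl
group being the infinite dihedral group generated by `s_0, s_1`), the affine
quantum Chevalley operators fail to commute without the `q^c` constraint:
`Λ_0 Λ_1(ε_{s_0 s_1}) - Λ_1 Λ_0(ε_{s_0 s_1}) = q^c · ε_e`, where
`q^c = q_0 q_1` and `e` is the identity of `W_aff`. -/
theorem sl2_chevalley_noncommute {W : Type*} [Group W]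
    (R : AffineRootSystem 1 W)
    (hc : ∀ i j, R.cartan i j = if i = j then 2 else -2) :
    R.Lam 0 (R.Lam 1 (AffineRootSystem.eps (R.cs.simple 0 * R.cs.simple 1)))
      - R.Lam 1 (R.Lam 0 (AffineRootSystem.eps (R.cs.simple 0 * R.cs.simple 1)))
      = fun v => (MvPolynomial.X 0 * MvPolynomial.X 1)
          * AffineRootSystem.eps (1 : W) v := by
  have hs : R.cs.simple 0 * R.cs.simple 1 = Sl2Aux.g1 R 2 := (Sl2Aux.g1_two R).symm
  rw [hs]
  -- first composite
  rw [Sl2Aux.lam1 R hc 1]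
  rw [Sl2Aux.Lam_add R hc 0
      (fun v => (Sl2Aux.vec 1 0 1) • AffineRootSystem.eps (Sl2Aux.g0 R 3) v
        + (Sl2Aux.vec 2 3 1) • AffineRootSystem.eps (Sl2Aux.g1 R 3) v)
      (fun v => (Sl2Aux.vec 0 1 1) • (MvPolynomial.X 1
        * AffineRootSystem.eps (Sl2Aux.g0 R 1) v))]
  rw [Sl2Aux.Lam_add R hc 0
      (fun v => (Sl2Aux.vec 1 0 1) • AffineRootSystem.eps (Sl2Aux.g0 R 3) v)
      (fun v => (Sl2Aux.vec 2 3 1) • AffineRootSystem.eps (Sl2Aux.g1 R 3) v)]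
  rw [Sl2Aux.Lam_zsmul R hc 0 (Sl2Aux.vec 1 0 1) (AffineRootSystem.eps (Sl2Aux.g0 R 3)),
    Sl2Aux.Lam_zsmul R hc 0 (Sl2Aux.vec 2 3 1) (AffineRootSystem.eps (Sl2Aux.g1 R 3))]
  have hmul1 : R.Lam 0 (fun v => (Sl2Aux.vec 0 1 1) • (MvPolynomial.X 1
      * AffineRootSystem.eps (Sl2Aux.g0 R 1) v))
      = fun v => (Sl2Aux.vec 0 1 1) • (MvPolynomial.X 1
        * R.Lam 0 (AffineRootSystem.eps (Sl2Aux.g0 R 1)) v) := by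
    rw [Sl2Aux.Lam_zsmul R hc 0 (Sl2Aux.vec 0 1 1)
        (fun v => MvPolynomial.X 1 * AffineRootSystem.eps (Sl2Aux.g0 R 1) v),
      Sl2Aux.Lam_mulX R hc 0 (MvPolynomial.X 1) (AffineRootSystem.eps (Sl2Aux.g0 R 1))]
  rw [hmul1]
  rw [Sl2Aux.lam4 R hc 0, Sl2Aux.lam2 R hc 0, Sl2Aux.lam3 R hc 0]
  -- second composite
  rw [Sl2Aux.lam1 R hc 0]
  rw [Sl2Aux.Lam_add R hc 1
      (fun v => (Sl2Aux.vec 1 0 0) • AffineRootSystem.eps (Sl2Aux.g0 R 3) v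
        + (Sl2Aux.vec 2 3 0) • AffineRootSystem.eps (Sl2Aux.g1 R 3) v)
      (fun v => (Sl2Aux.vec 0 1 0) • (MvPolynomial.X 1
        * AffineRootSystem.eps (Sl2Aux.g0 R 1) v))]
  rw [Sl2Aux.Lam_add R hc 1
      (fun v => (Sl2Aux.vec 1 0 0) • AffineRootSystem.eps (Sl2Aux.g0 R 3) v)
      (fun v => (Sl2Aux.vec 2 3 0) • AffineRootSystem.eps (Sl2Aux.g1 R 3) v)]
  rw [Sl2Aux.Lam_zsmul R hc 1 (Sl2Aux.vec 1 0 0) (AffineRootSystem.eps (Sl2Aux.g0 R 3)),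
    Sl2Aux.Lam_zsmul R hc 1 (Sl2Aux.vec 2 3 0) (AffineRootSystem.eps (Sl2Aux.g1 R 3))]
  have hmul2 : R.Lam 1 (fun v => (Sl2Aux.vec 0 1 0) • (MvPolynomial.X 1
      * AffineRootSystem.eps (Sl2Aux.g0 R 1) v))
      = fun v => (Sl2Aux.vec 0 1 0) • (MvPolynomial.X 1
        * R.Lam 1 (AffineRootSystem.eps (Sl2Aux.g0 R 1)) v) := by
    rw [Sl2Aux.Lam_zsmul R hc 1 (Sl2Aux.vec 0 1 0)
        (fun v => MvPolynomial.X 1 * AffineRootSystem.eps (Sl2Aux.g0 R 1) v),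
      Sl2Aux.Lam_mulX R hc 1 (MvPolynomial.X 1) (AffineRootSystem.eps (Sl2Aux.g0 R 1))]
  rw [hmul2]
  rw [Sl2Aux.lam4 R hc 1, Sl2Aux.lam2 R hc 1, Sl2Aux.lam3 R hc 1]
  -- now everything is explicit; finish pointwise
  funext v
  have c1 : (Sl2Aux.vec 1 0 0 : ℤ) = 1 := rfl
  have c2 : (Sl2Aux.vec 1 0 1 : ℤ) = 0 := rfl
  have c3 : (Sl2Aux.vec 0 1 0 : ℤ) = 0 := rfl
  have c4 : (Sl2Aux.vec 0 1 1 : ℤ) = 1 := rfl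
  have c5 : (Sl2Aux.vec 2 3 0 : ℤ) = 2 := rfl
  have c6 : (Sl2Aux.vec 2 3 1 : ℤ) = 3 := rfl
  have c7 : (Sl2Aux.vec 3 4 0 : ℤ) = 3 := rfl
  have c8 : (Sl2Aux.vec 3 4 1 : ℤ) = 4 := rfl
  have c9 : (Sl2Aux.vec 4 3 0 : ℤ) = 4 := rfl
  have c10 : (Sl2Aux.vec 4 3 1 : ℤ) = 3 := rfl
  have c11 : (Sl2Aux.vec 2 1 0 : ℤ) = 2 := rfl
  have c12 : (Sl2Aux.vec 2 1 1 : ℤ) = 1 := rfl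
  simp only [Pi.sub_apply, c1, c2, c3, c4, c5, c6, c7, c8, c9, c10, c11, c12,
    Sl2Aux.g0_zero, zero_smul, one_smul, smul_add, zero_add, add_zero, smul_zero,
    zsmul_eq_mul]
  push_cast
  ring

end
end
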